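/- arXiv:2605.02747 — 5 statements merged into one kernel-verified Lean document; each statement's English description precedes it below -/
import Mathlib

section
/- There exists an absolute constant c > 0 such that for every n ≥ 1 there exist an isotropic log-concave probability measure μ on ℝⁿ and a convex body A in ℝⁿ with μ-perimeter μ⁺(∂A) = liminf_{ε→0⁺} (μ(A + εB₂ⁿ) − μ(A))/ε ≥ cn. -/
open MeasureTheory Filter Set Metric
open scoped Pointwise ENNReal NNReal Topology RealInnerProductSpace

/-- The Borel measure on `ℝⁿ` with density `f` with respect to Lebesgue measure. -/
noncomputable def densityMeasure {n : ℕ} (f : EuclideanSpace ℝ (Fin n) → ℝ) :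
    Measure (EuclideanSpace ℝ (Fin n)) :=
  (volume : Measure (EuclideanSpace ℝ (Fin n))).withDensity fun x => ENNReal.ofReal (f x)

/-- `f = e^{-ψ}` for a convex `ψ : ℝⁿ → (-∞, ∞]`. -/
def IsLogConcaveFn {n : ℕ} (f : EuclideanSpace ℝ (Fin n) → ℝ) : Prop :=
  (∀ x, 0 ≤ f x) ∧
  ∀ x y : EuclideanSpace ℝ (Fin n), ∀ a b : ℝ, 0 ≤ a → 0 ≤ b → a + b = 1 →
    f x ^ a * f y ^ b ≤ f (a • x + b • y)

/-- Isotropicity: barycenter at the origin and covariance equal to the identity. -/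
def IsIsotropicFn {n : ℕ} (f : EuclideanSpace ℝ (Fin n) → ℝ) : Prop :=
  (∫ x, f x • x = 0) ∧
  ∀ ξ : EuclideanSpace ℝ (Fin n), (∫ x, ⟪x, ξ⟫ ^ 2 * f x) = ‖ξ‖ ^ 2

/-- The `μ`-perimeter `μ⁺(∂A) = liminf_{ε→0⁺} (μ(A + εB₂ⁿ) − μ(A))/ε`. -/
noncomputable def muPerimeter {n : ℕ} (μ : Measure (EuclideanSpace ℝ (Fin n)))
    (A : Set (EuclideanSpace ℝ (Fin n))) : ℝ :=
  Filter.liminf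
    (fun ε : ℝ => ((μ (A + Metric.closedBall 0 ε)).toReal - (μ A).toReal) / ε)
    (nhdsWithin 0 (Set.Ioi 0))

def MPbox {n : ℕ} (T : Fin n → Set ℝ) : Set (EuclideanSpace ℝ (Fin n)) :=
  {x | ∀ i, x i ∈ T i}

lemma MPbox_eq_preimage {n : ℕ} (T : Fin n → Set ℝ) :
    MPbox T = ((MeasurableEquiv.toLp 2 (Fin n → ℝ)).symm) ⁻¹' (Set.pi Set.univ T) := by
  ext x; simp [MPbox, MeasurableEquiv.coe_toLp_symm, Set.mem_pi]

lemma MPbox_measurable {n : ℕ} {T : Fin n → Set ℝ} (hT : ∀ i, MeasurableSet (T i)) :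
    MeasurableSet (MPbox T) := by
  rw [MPbox_eq_preimage]
  exact ((MeasurableEquiv.toLp 2 (Fin n → ℝ)).symm).measurable (MeasurableSet.univ_pi hT)

lemma MPvolume_box {n : ℕ} {T : Fin n → Set ℝ} (hT : ∀ i, MeasurableSet (T i)) :
    volume (MPbox T) = ∏ i, volume (T i) := by
  rw [MPbox_eq_preimage,
    (EuclideanSpace.volume_preserving_symm_measurableEquiv_toLp (Fin n)).measure_preimage
      (MeasurableSet.univ_pi hT).nullMeasurableSet]
  exact volume_pi_pi T

noncomputable def MPc (n : ℕ) : ℝ := ((2 * Real.sqrt 3) ^ n)⁻¹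

def MPQ (n : ℕ) : Set (EuclideanSpace ℝ (Fin n)) :=
  MPbox (fun _ => Icc (-(Real.sqrt 3)) (Real.sqrt 3))

noncomputable def MPf (n : ℕ) : EuclideanSpace ℝ (Fin n) → ℝ :=
  (MPQ n).indicator (fun _ => MPc n)

lemma MPs_pos : (0:ℝ) < 2 * Real.sqrt 3 := by positivity

lemma MPc_pos (n : ℕ) : 0 < MPc n :=
  inv_pos.2 (pow_pos MPs_pos n)

lemma MPQ_measurable (n : ℕ) : MeasurableSet (MPQ n) :=
  MPbox_measurable fun _ => measurableSet_Icc

lemma MPvolume_Q (n : ℕ) :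
    volume (MPQ n) = ENNReal.ofReal ((2 * Real.sqrt 3) ^ n) := by
  rw [MPQ, MPvolume_box fun _ => measurableSet_Icc]
  simp only [Real.volume_Icc]
  have h : Real.sqrt 3 - -Real.sqrt 3 = 2 * Real.sqrt 3 := by ring
  rw [h, Finset.prod_const, Finset.card_univ, Fintype.card_fin,
    ← ENNReal.ofReal_pow MPs_pos.le]

lemma MPmu_eq (n : ℕ) :
    densityMeasure (MPf n) = ENNReal.ofReal (MPc n) • (volume.restrict (MPQ n)) := by
  rw [densityMeasure]
  have : (fun x => ENNReal.ofReal (MPf n x))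
      = (MPQ n).indicator (fun _ => ENNReal.ofReal (MPc n)) := by
    ext x
    by_cases hx : x ∈ MPQ n <;> simp [MPf, hx]
  rw [this, withDensity_indicator (MPQ_measurable n), withDensity_const]

lemma MPmu_apply (n : ℕ) (E : Set (EuclideanSpace ℝ (Fin n))) :
    densityMeasure (MPf n) E = ENNReal.ofReal (MPc n) * volume (E ∩ MPQ n) := by
  rw [MPmu_eq, Measure.smul_apply, Measure.restrict_apply' (MPQ_measurable n), smul_eq_mul]

lemma MPprob (n : ℕ) : IsProbabilityMeasure (densityMeasure (MPf n)) := by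
  constructor
  rw [MPmu_apply, Set.univ_inter, MPvolume_Q, MPc,
    ← ENNReal.ofReal_mul (le_of_lt (by exact inv_pos.2 (pow_pos MPs_pos n))),
    inv_mul_cancel₀ (ne_of_gt (pow_pos MPs_pos n))]
  exact ENNReal.ofReal_one

lemma MPf_nonneg (n : ℕ) (x : EuclideanSpace ℝ (Fin n)) : 0 ≤ MPf n x :=
  Set.indicator_nonneg (fun _ _ => (MPc_pos n).le) x

lemma MPQ_convex (n : ℕ) : Convex ℝ (MPQ n) := by
  intro x hx y hy a b ha hb hab
  intro i
  have : (a • x + b • y) i = a * x i + b * y i := rfl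
  rw [this]
  exact convex_Icc _ _ (hx i) (hy i) ha hb hab

lemma MPlogconcave (n : ℕ) : IsLogConcaveFn (MPf n) := by
  refine ⟨MPf_nonneg n, fun x y a b ha hb hab => ?_⟩
  rcases eq_or_lt_of_le ha with ha0 | ha0
  · have hb1 : b = 1 := by linarith
    subst hb1; rw [← ha0]
    simp [Real.rpow_one]
  rcases eq_or_lt_of_le hb with hb0 | hb0
  · have ha1 : a = 1 := by linarith
    subst ha1; rw [← hb0]
    simp [Real.rpow_one]
  by_cases hx : x ∈ MPQ n
  · by_cases hy : y ∈ MPQ n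
    · have hxy : a • x + b • y ∈ MPQ n := MPQ_convex n hx hy ha hb hab
      simp only [MPf, Set.indicator_of_mem hx, Set.indicator_of_mem hy,
        Set.indicator_of_mem hxy]
      rw [← Real.rpow_add (MPc_pos n), hab, Real.rpow_one]
    · have : MPf n y = 0 := Set.indicator_of_notMem hy _
      rw [this, Real.zero_rpow (ne_of_gt hb0), mul_zero]
      exact MPf_nonneg n _
  · have : MPf n x = 0 := Set.indicator_of_notMem hx _
    rw [this, Real.zero_rpow (ne_of_gt ha0), zero_mul]
    exact MPf_nonneg n _

lemma MPf_neg (n : ℕ) (x : EuclideanSpace ℝ (Fin n)) : MPf n (-x) = MPf n x := by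
  have hQ : (-x ∈ MPQ n) ↔ (x ∈ MPQ n) := by
    constructor <;> intro h i
    · have := h i
      have hx : (-x) i = -(x i) := rfl
      rw [hx] at this
      simp only [Set.mem_Icc] at this ⊢
      constructor <;> linarith [this.1, this.2]
    · have := h i
      have hx : (-x) i = -(x i) := rfl
      rw [hx]
      simp only [Set.mem_Icc] at this ⊢
      constructor <;> linarith [this.1, this.2]
  by_cases h : x ∈ MPQ n
  · rw [MPf, Set.indicator_of_mem h, Set.indicator_of_mem (hQ.2 h)]
  · rw [MPf, Set.indicator_of_notMem h, Set.indicator_of_notMem (fun hh => h (hQ.1 hh))]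

lemma MPfirst (n : ℕ) : (∫ x, MPf n x • x) = 0 := by
  have h := MeasureTheory.integral_neg_eq_self (fun x => MPf n x • x)
    (volume : Measure (EuclideanSpace ℝ (Fin n)))
  have h2 : (∫ x, MPf n (-x) • (-x)) = - ∫ x, MPf n x • x := by
    simp_rw [MPf_neg, smul_neg]
    exact integral_neg _
  rw [h2] at h
  have h3 : (2:ℝ) • (∫ x, MPf n x • x) = 0 := by
    rw [two_smul]
    exact neg_eq_iff_add_eq_zero.mp h
  rcases smul_eq_zero.mp h3 with h4 | h4
  · norm_num at h4
  · exact h4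

noncomputable def MPg {n : ℕ} (i j k : Fin n) : ℝ → ℝ :=
  (Icc (-(Real.sqrt 3)) (Real.sqrt 3)).indicator
    (fun t => (if i = k then t else 1) * (if j = k then t else 1))

lemma MPg_cont {n : ℕ} (i j k : Fin n) :
    Continuous (fun t : ℝ => (if i = k then t else 1) * (if j = k then t else 1)) := by
  apply Continuous.mul <;> (split_ifs <;> first | exact continuous_id | exact continuous_const)

lemma MPg_integrable {n : ℕ} (i j k : Fin n) : Integrable (MPg i j k) := by
  rw [MPg]
  exact ((MPg_cont i j k).continuousOn.integrableOn_compact isCompact_Icc).integrable_indicator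
    measurableSet_Icc

lemma MPg_integral_eq {n : ℕ} (i j k : Fin n) :
    (∫ t, MPg i j k t) =
      ∫ t in (-(Real.sqrt 3))..(Real.sqrt 3),
        (if i = k then t else 1) * (if j = k then t else 1) := by
  rw [MPg, MeasureTheory.integral_indicator measurableSet_Icc,
    MeasureTheory.integral_Icc_eq_integral_Ioc,
    ← intervalIntegral.integral_of_le (by have := Real.sqrt_nonneg 3; linarith)]

lemma MPg_int_diag {n : ℕ} (i k : Fin n) : (∫ t, MPg i i k t) = 2 * Real.sqrt 3 := by
  rw [MPg_integral_eq]
  by_cases h : i = k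
  · subst h
    simp only [eq_self_iff_true, if_true]
    have : ∀ t : ℝ, t * t = t ^ 2 := fun t => (sq t).symm
    simp_rw [this]
    rw [integral_pow]
    have h3 : (Real.sqrt 3) ^ 3 = 3 * Real.sqrt 3 := by
      rw [pow_succ, Real.sq_sqrt (by norm_num : (3:ℝ) ≥ 0)]
    push_cast
    rw [Odd.neg_pow (by decide : Odd 3)]
    rw [h3]
    ring
  · simp only [if_neg h, mul_one]
    rw [intervalIntegral.integral_const, smul_eq_mul, mul_one]
    ring

lemma MPg_int_offdiag {n : ℕ} (i j : Fin n) (h : j ≠ i) : (∫ t, MPg i j i t) = 0 := by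
  rw [MPg_integral_eq]
  simp only [eq_self_iff_true, if_true, if_neg h]
  rw [intervalIntegral.integral_mul_const, integral_id]
  ring

lemma MPinner_symm {n : ℕ} (ξ : EuclideanSpace ℝ (Fin n)) (y : Fin n → ℝ) :
    ⟪((MeasurableEquiv.toLp 2 (Fin n → ℝ)).symm).symm y, ξ⟫ = ∑ i, y i * ξ i := by
  rw [PiLp.inner_apply]
  exact Finset.sum_congr rfl fun i _ => by simp [mul_comm]

lemma MPpointwise {n : ℕ} (ξ : EuclideanSpace ℝ (Fin n)) (y : Fin n → ℝ) :
    ⟪((MeasurableEquiv.toLp 2 (Fin n → ℝ)).symm).symm y, ξ⟫ ^ 2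
        * MPf n (((MeasurableEquiv.toLp 2 (Fin n → ℝ)).symm).symm y)
      = ∑ i, ∑ j, (ξ i * ξ j * MPc n) * ∏ k, MPg i j k (y k) := by
  rw [MPinner_symm]
  by_cases h : ∀ k, y k ∈ Icc (-(Real.sqrt 3)) (Real.sqrt 3)
  · have hmem : ((MeasurableEquiv.toLp 2 (Fin n → ℝ)).symm).symm y ∈ MPQ n := fun k => h k
    rw [MPf, Set.indicator_of_mem hmem]
    have hg : ∀ i j : Fin n, (∏ k, MPg i j k (y k)) = y i * y j := by
      intro i j
      have hk : ∀ k, MPg i j k (y k)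
          = (if i = k then y k else 1) * (if j = k then y k else 1) :=
        fun k => Set.indicator_of_mem (h k) _
      simp_rw [hk, Finset.prod_mul_distrib, Finset.prod_ite_eq, Finset.mem_univ, if_true]
    simp_rw [hg]
    rw [sq, Finset.sum_mul_sum, Finset.sum_mul]
    refine Finset.sum_congr rfl fun i _ => ?_
    rw [Finset.sum_mul]
    exact Finset.sum_congr rfl fun j _ => by ring
  · push_neg at h
    obtain ⟨k0, hk0⟩ := h
    have hmem : ((MeasurableEquiv.toLp 2 (Fin n → ℝ)).symm).symm y ∉ MPQ n := fun hh => hk0 (hh k0)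
    rw [MPf, Set.indicator_of_notMem hmem, mul_zero]
    symm
    refine Finset.sum_eq_zero fun i _ => Finset.sum_eq_zero fun j _ => ?_
    have hz : (∏ k, MPg i j k (y k)) = 0 :=
      Finset.prod_eq_zero (Finset.mem_univ k0) (Set.indicator_of_notMem hk0 _)
    rw [hz, mul_zero]

lemma MPsecond (n : ℕ) (ξ : EuclideanSpace ℝ (Fin n)) :
    (∫ x, ⟪x, ξ⟫ ^ 2 * MPf n x) = ‖ξ‖ ^ 2 := by
  have he := (EuclideanSpace.volume_preserving_symm_measurableEquiv_toLp (Fin n)).symm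
  rw [← he.integral_comp' (fun x => ⟪x, ξ⟫ ^ 2 * MPf n x)]
  simp only [MPpointwise]
  rw [integral_finset_sum (μ := volume) _ (fun i _ => integrable_finset_sum Finset.univ (fun j _ =>
    (MeasureTheory.Integrable.fintype_prod (f := fun k => MPg i j k) (fun k => MPg_integrable i j k)).const_mul _))]
  have hstep : ∀ i : Fin n,
      (∫ y : Fin n → ℝ, ∑ j, (ξ i * ξ j * MPc n) * ∏ k, MPg i j k (y k))
        = ∑ j, (ξ i * ξ j * MPc n) * ∏ k, (∫ t, MPg i j k t) := by
    intro i
    rw [integral_finset_sum (μ := volume) _ (fun j _ =>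
      (MeasureTheory.Integrable.fintype_prod (f := fun k => MPg i j k) (fun k => MPg_integrable i j k)).const_mul _)]
    refine Finset.sum_congr rfl fun j _ => ?_
    rw [integral_const_mul, integral_fintype_prod_volume_eq_prod]
  simp_rw [hstep]
  have hterm : ∀ i j : Fin n,
      (ξ i * ξ j * MPc n) * ∏ k, (∫ t, MPg i j k t) = if j = i then ξ i * ξ i else 0 := by
    intro i j
    by_cases h : j = i
    · subst h
      rw [if_pos rfl]
      have : ∀ k : Fin n, (∫ t, MPg j j k t) = 2 * Real.sqrt 3 := fun k => MPg_int_diag j k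
      simp_rw [this, Finset.prod_const, Finset.card_univ, Fintype.card_fin]
      rw [MPc]
      field_simp
    · rw [if_neg h]
      have hz : (∏ k, (∫ t, MPg i j k t)) = 0 :=
        Finset.prod_eq_zero (Finset.mem_univ i) (MPg_int_offdiag i j h)
      rw [hz, mul_zero]
  simp_rw [hterm, Finset.sum_ite_eq' Finset.univ, Finset.mem_univ, if_true]
  rw [← real_inner_self_eq_norm_sq, PiLp.inner_apply]
  simp [RCLike.inner_apply, conj_trivial, sq]

noncomputable def MPra (n : ℕ) : ℝ := (1 - 1/(2*n)) * Real.sqrt 3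

def MPA (n : ℕ) : Set (EuclideanSpace ℝ (Fin n)) :=
  MPbox (fun _ => Icc (-(MPra n)) (MPra n))

lemma MPra_pos {n : ℕ} (hn : 1 ≤ n) : 0 < MPra n := by
  have h1 : (1:ℝ) ≤ n := by exact_mod_cast hn
  have h2 : 1/(2*(n:ℝ)) ≤ 1/2 := by
    apply div_le_div_of_nonneg_left <;> linarith
  have := Real.sqrt_pos.2 (by norm_num : (0:ℝ) < 3)
  have : (0:ℝ) < 1 - 1/(2*(n:ℝ)) := by linarith
  exact mul_pos this (Real.sqrt_pos.2 (by norm_num))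

lemma MPra_lt {n : ℕ} (hn : 1 ≤ n) : MPra n < Real.sqrt 3 := by
  have h1 : (1:ℝ) ≤ n := by exact_mod_cast hn
  have h2 : 0 < 1/(2*(n:ℝ)) := by positivity
  have h3 := Real.sqrt_pos.2 (by norm_num : (0:ℝ) < 3)
  calc MPra n < 1 * Real.sqrt 3 := by
        apply mul_lt_mul_of_pos_right _ h3; linarith
    _ = Real.sqrt 3 := one_mul _

lemma MPcoord_le {n : ℕ} (x : EuclideanSpace ℝ (Fin n)) (i : Fin n) : |x i| ≤ ‖x‖ := by
  rw [EuclideanSpace.norm_eq]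
  have h1 : |x i| = Real.sqrt (‖x i‖ ^ 2) := by
    rw [Real.norm_eq_abs, Real.sqrt_sq_eq_abs, abs_abs]
  rw [h1]
  apply Real.sqrt_le_sqrt
  exact Finset.single_le_sum (fun j _ => sq_nonneg (‖x j‖)) (Finset.mem_univ i)

lemma MPbox_isClosed {n : ℕ} {T : Fin n → Set ℝ} (hT : ∀ i, IsClosed (T i)) :
    IsClosed (MPbox T) := by
  have h : MPbox T = ⋂ i, (fun x : EuclideanSpace ℝ (Fin n) => x i) ⁻¹' (T i) := by
    ext x; simp [MPbox]
  rw [h]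
  refine isClosed_iInter fun i => (hT i).preimage ?_
  exact (continuous_apply i).comp (PiLp.continuousLinearEquiv 2 ℝ _).continuous

lemma MPA_compact {n : ℕ} : IsCompact (MPA n) := by
  apply Metric.isCompact_of_isClosed_isBounded
  · exact MPbox_isClosed fun _ => isClosed_Icc
  · rw [Metric.isBounded_iff_subset_closedBall 0]
    refine ⟨Real.sqrt 3 * Real.sqrt n, fun x hx => ?_⟩
    rw [mem_closedBall_zero_iff, EuclideanSpace.norm_eq]
    have hb : ∀ i, ‖x i‖ ^ 2 ≤ 3 := by
      intro i
      have h1 := hx i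
      simp only [Set.mem_Icc] at h1
      have h2 : |x i| ≤ MPra n := abs_le.2 h1
      have h3 : MPra n ≤ Real.sqrt 3 := by
        rcases Nat.eq_zero_or_pos n with h | h
        · exact absurd (Fin.pos i) (by omega)
        · exact (MPra_lt h).le
      have h4 : |x i| ≤ Real.sqrt 3 := h2.trans h3
      calc ‖x i‖ ^ 2 = |x i| ^ 2 := by rw [Real.norm_eq_abs]
        _ ≤ (Real.sqrt 3) ^ 2 := by
            apply pow_le_pow_left₀ (abs_nonneg _) h4
        _ = 3 := Real.sq_sqrt (by norm_num)
    have hsum : (∑ i, ‖x i‖ ^ 2) ≤ 3 * n := by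
      calc (∑ i, ‖x i‖ ^ 2) ≤ ∑ _i : Fin n, (3:ℝ) := Finset.sum_le_sum fun i _ => hb i
        _ = 3 * n := by rw [Finset.sum_const, Finset.card_univ, Fintype.card_fin]; ring
    calc Real.sqrt (∑ i, ‖x i‖ ^ 2) ≤ Real.sqrt (3 * n) := Real.sqrt_le_sqrt hsum
      _ = Real.sqrt 3 * Real.sqrt n := Real.sqrt_mul (by norm_num) _

lemma MPA_convex {n : ℕ} : Convex ℝ (MPA n) := by
  intro x hx y hy a b ha hb hab i
  have : (a • x + b • y) i = a * x i + b * y i := rfl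
  rw [this]
  exact convex_Icc _ _ (hx i) (hy i) ha hb hab

lemma MPA_interior {n : ℕ} (hn : 1 ≤ n) : (interior (MPA n)).Nonempty := by
  refine ⟨0, ?_⟩
  rw [mem_interior]
  refine ⟨Metric.ball 0 (MPra n), fun x hx i => ?_, Metric.isOpen_ball,
    Metric.mem_ball_self (MPra_pos hn)⟩
  rw [mem_ball_zero_iff] at hx
  have := (MPcoord_le x i).trans hx.le
  rw [Set.mem_Icc]
  exact abs_le.1 this

def MPS (n : ℕ) (ε : ℝ) (i : Fin n) : Set (EuclideanSpace ℝ (Fin n)) :=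
  MPbox (fun j => if j = i then Ioc (MPra n) (MPra n + ε) else Icc (-(MPra n)) (MPra n))

lemma MPS_measurable {n : ℕ} (ε : ℝ) (i : Fin n) : MeasurableSet (MPS n ε i) :=
  MPbox_measurable fun j => by
    split_ifs
    exacts [measurableSet_Ioc, measurableSet_Icc]

lemma MPA_measurable {n : ℕ} : MeasurableSet (MPA n) :=
  MPbox_measurable fun _ => measurableSet_Icc

lemma MPvol_A {n : ℕ} (hn : 1 ≤ n) :
    volume (MPA n) = ENNReal.ofReal ((2 * MPra n) ^ n) := by
  rw [MPA, MPvolume_box fun _ => measurableSet_Icc]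
  simp only [Real.volume_Icc]
  have h : MPra n - -(MPra n) = 2 * MPra n := by ring
  rw [h, Finset.prod_const, Finset.card_univ, Fintype.card_fin,
    ← ENNReal.ofReal_pow (by linarith [MPra_pos hn])]

lemma MPvol_S {n : ℕ} (hn : 1 ≤ n) {ε : ℝ} (hε : 0 ≤ ε) (i : Fin n) :
    volume (MPS n ε i) = ENNReal.ofReal (ε * (2 * MPra n) ^ (n - 1)) := by
  rw [MPS, MPvolume_box fun j => by split_ifs; exacts [measurableSet_Ioc, measurableSet_Icc]]
  rw [← Finset.mul_prod_erase Finset.univ _ (Finset.mem_univ i)]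
  rw [if_pos rfl]
  have h1 : ∀ j ∈ Finset.univ.erase i,
      volume (if j = i then Ioc (MPra n) (MPra n + ε) else Icc (-(MPra n)) (MPra n))
        = ENNReal.ofReal (2 * MPra n) := by
    intro j hj
    rw [if_neg (Finset.ne_of_mem_erase hj), Real.volume_Icc]
    congr 1
    ring
  rw [Finset.prod_congr rfl h1, Finset.prod_const, Finset.card_erase_of_mem (Finset.mem_univ i),
    Finset.card_univ, Fintype.card_fin, Real.volume_Ioc]
  have h2 : MPra n + ε - MPra n = ε := by ring
  rw [h2, ← ENNReal.ofReal_pow (by linarith [MPra_pos hn]), ← ENNReal.ofReal_mul hε]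

lemma MPS_disj_A {n : ℕ} {ε : ℝ} (i : Fin n) : Disjoint (MPA n) (MPS n ε i) := by
  rw [Set.disjoint_left]
  intro x hxA hxS
  have h1 := hxA i
  have h2 : x i ∈ Ioc (MPra n) (MPra n + ε) := by simpa using hxS i
  exact absurd h1.2 (not_le.2 h2.1)

lemma MPS_pairwise {n : ℕ} {ε : ℝ} : Pairwise (Function.onFun Disjoint (MPS n ε)) := by
  intro i j hij
  rw [Function.onFun, Set.disjoint_left]
  intro x hxi hxj
  have h1 : x j ∈ Icc (-(MPra n)) (MPra n) := by simpa [Ne.symm hij] using hxi j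
  have h2 : x j ∈ Ioc (MPra n) (MPra n + ε) := by simpa using hxj j
  exact absurd h1.2 (not_le.2 h2.1)

lemma MPA_subset_Q {n : ℕ} (hn : 1 ≤ n) : MPA n ⊆ MPQ n := by
  intro x hx i
  have h := hx i
  simp only [Set.mem_Icc] at h ⊢
  have := (MPra_lt hn).le
  constructor <;> linarith [h.1, h.2]

lemma MPS_subset {n : ℕ} (hn : 1 ≤ n) {ε : ℝ} (hε : 0 < ε)
    (hε2 : MPra n + ε ≤ Real.sqrt 3) (i : Fin n) :
    MPS n ε i ⊆ (MPA n + Metric.closedBall 0 ε) ∩ MPQ n := by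
  intro x hx
  have hxi : x i ∈ Ioc (MPra n) (MPra n + ε) := by simpa using hx i
  have hxj : ∀ j, j ≠ i → x j ∈ Icc (-(MPra n)) (MPra n) := by
    intro j hj; simpa [hj] using hx j
  have hra := MPra_pos hn
  constructor
  · rw [Set.mem_add]
    refine ⟨x + (MPra n - x i) • EuclideanSpace.single i (1:ℝ), ?_,
      (x i - MPra n) • EuclideanSpace.single i (1:ℝ), ?_, ?_⟩
    · intro j
      have hc : (x + (MPra n - x i) • EuclideanSpace.single i (1:ℝ)) j
          = x j + (MPra n - x i) * (EuclideanSpace.single i (1:ℝ) j) := rfl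
      rw [hc, EuclideanSpace.single_apply]
      by_cases hji : j = i
      · subst hji
        rw [if_pos rfl, mul_one]
        have : x j + (MPra n - x j) = MPra n := by ring
        rw [this]
        exact ⟨by linarith, le_refl _⟩
      · rw [if_neg hji, mul_zero, add_zero]
        exact hxj j hji
    · rw [mem_closedBall_zero_iff, norm_smul, EuclideanSpace.norm_single, norm_one, mul_one,
        Real.norm_eq_abs, abs_of_pos (by linarith [hxi.1])]
      linarith [hxi.2]
    · rw [add_assoc, ← add_smul]
      have : (MPra n - x i) + (x i - MPra n) = 0 := by ring
      rw [this, zero_smul, add_zero]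
  · intro j
    have hs3 := Real.sqrt_nonneg 3
    by_cases hji : j = i
    · subst hji
      rw [Set.mem_Icc]
      exact ⟨by linarith [hxi.1], by linarith [hxi.2]⟩
    · have h := hxj j hji
      simp only [Set.mem_Icc] at h ⊢
      have := MPra_lt hn
      constructor <;> linarith [h.1, h.2]

lemma MPvol_bound {n : ℕ} (hn : 1 ≤ n) {ε : ℝ} (hε : 0 < ε)
    (hε2 : MPra n + ε ≤ Real.sqrt 3) :
    ENNReal.ofReal ((2 * MPra n) ^ n) + ENNReal.ofReal (ε * (n * (2 * MPra n) ^ (n - 1)))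
      ≤ volume ((MPA n + Metric.closedBall 0 ε) ∩ MPQ n) := by
  have hsub : MPA n ∪ (⋃ i, MPS n ε i) ⊆ (MPA n + Metric.closedBall 0 ε) ∩ MPQ n := by
    apply Set.union_subset
    · intro x hx
      constructor
      · rw [Set.mem_add]
        exact ⟨x, hx, 0, Metric.mem_closedBall_self hε.le, add_zero x⟩
      · exact MPA_subset_Q hn hx
    · exact Set.iUnion_subset (MPS_subset hn hε hε2)
  calc ENNReal.ofReal ((2 * MPra n) ^ n) + ENNReal.ofReal (ε * (n * (2 * MPra n) ^ (n - 1)))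
      = volume (MPA n) + ∑ i : Fin n, volume (MPS n ε i) := by
        rw [MPvol_A hn]
        congr 1
        have : ∀ i : Fin n, volume (MPS n ε i) = ENNReal.ofReal (ε * (2 * MPra n) ^ (n - 1)) :=
          fun i => MPvol_S hn hε.le i
        simp_rw [this, Finset.sum_const, Finset.card_univ, Fintype.card_fin, nsmul_eq_mul]
        rw [← ENNReal.ofReal_natCast n, ← ENNReal.ofReal_mul (by positivity)]
        congr 1
        ring
    _ = volume (MPA n ∪ ⋃ i, MPS n ε i) := by
        rw [measure_union _ (MeasurableSet.iUnion fun i => MPS_measurable ε i),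
          measure_iUnion MPS_pairwise (fun i => MPS_measurable ε i), tsum_fintype]
        · rw [Set.disjoint_iUnion_right]
          exact fun i => MPS_disj_A i
    _ ≤ _ := measure_mono hsub

lemma MPpow_sub_le {a b : ℝ} (hb : 0 ≤ b) (hab : b ≤ a) (n : ℕ) :
    a ^ n - b ^ n ≤ n * (a - b) * a ^ (n - 1) := by
  induction n with
  | zero => simp
  | succ m ih =>
    have ha : 0 ≤ a := hb.trans hab
    have key : a * (a ^ m - b ^ m) ≤ m * (a - b) * a ^ m := by
      rcases Nat.eq_zero_or_pos m with hm | hm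
      · subst hm; simp
      · have h1 : a * (a ^ m - b ^ m) ≤ a * (m * (a - b) * a ^ (m - 1)) :=
          mul_le_mul_of_nonneg_left ih ha
        have h2 : a * (m * (a - b) * a ^ (m - 1)) = m * (a - b) * (a * a ^ (m - 1)) := by ring
        have h3 : a * a ^ (m - 1) = a ^ m := by
          rw [← pow_succ']
          congr 1
          omega
        linarith [h1, h2.symm ▸ h1, h3 ▸ h2 ▸ h1]
    have hbn : b ^ m ≤ a ^ m := pow_le_pow_left₀ hb hab m
    have hexp : (m + 1 : ℕ) - 1 = m := rfl
    rw [hexp]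
    have e1 : a ^ (m + 1) - b ^ (m + 1) = a * (a ^ m - b ^ m) + (a - b) * b ^ m := by ring
    have e2 : (a - b) * b ^ m ≤ (a - b) * a ^ m :=
      mul_le_mul_of_nonneg_left hbn (by linarith)
    push_cast
    nlinarith [key, e2]

lemma MPadd_subset_box {n : ℕ} (hn : 1 ≤ n) {ε : ℝ} (hε : 0 ≤ ε) :
    MPA n + Metric.closedBall 0 ε ⊆ MPbox (fun _ => Icc (-(MPra n + ε)) (MPra n + ε)) := by
  rintro z hz
  rw [Set.mem_add] at hz
  obtain ⟨a, ha, b, hb, rfl⟩ := hz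
  intro i
  have h1 := ha i
  simp only [Set.mem_Icc] at h1 ⊢
  have h2 : |b i| ≤ ε := (MPcoord_le b i).trans (by rwa [mem_closedBall_zero_iff] at hb)
  have h3 := abs_le.1 h2
  have hc : (a + b) i = a i + b i := rfl
  rw [hc]
  constructor <;> linarith [h1.1, h1.2, h3.1, h3.2]

lemma MPmuA_toReal {n : ℕ} (hn : 1 ≤ n) :
    (densityMeasure (MPf n) (MPA n)).toReal = MPc n * (2 * MPra n) ^ n := by
  rw [MPmu_apply, Set.inter_eq_self_of_subset_left (MPA_subset_Q hn), MPvol_A hn,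
    ← ENNReal.ofReal_mul (MPc_pos n).le, ENNReal.toReal_ofReal]
  exact mul_nonneg (MPc_pos n).le (pow_nonneg (by linarith [MPra_pos hn]) n)

lemma MPmu_ne_top {n : ℕ} (E : Set (EuclideanSpace ℝ (Fin n))) :
    densityMeasure (MPf n) E ≠ ⊤ := by
  have := MPprob n
  exact measure_ne_top _ E

lemma MPquot_upper {n : ℕ} (hn : 1 ≤ n) {ε : ℝ} (hε : 0 < ε) (hε1 : ε ≤ 1) :
    ((densityMeasure (MPf n) (MPA n + Metric.closedBall 0 ε)).toReal
        - (densityMeasure (MPf n) (MPA n)).toReal) / ε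
      ≤ MPc n * ((n:ℝ) * 2 * (2 * MPra n + 2) ^ (n - 1)) := by
  have hra := MPra_pos hn
  have hub : (densityMeasure (MPf n) (MPA n + Metric.closedBall 0 ε)).toReal
      ≤ MPc n * (2 * MPra n + 2 * ε) ^ n := by
    have h1 : densityMeasure (MPf n) (MPA n + Metric.closedBall 0 ε)
        ≤ ENNReal.ofReal (MPc n * (2 * MPra n + 2 * ε) ^ n) := by
      rw [MPmu_apply]
      have h2 : volume ((MPA n + Metric.closedBall 0 ε) ∩ MPQ n)
          ≤ ENNReal.ofReal ((2 * MPra n + 2 * ε) ^ n) := by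
        refine le_trans (measure_mono ((Set.inter_subset_left).trans (MPadd_subset_box hn hε.le))) ?_
        rw [MPvolume_box fun _ => measurableSet_Icc]
        simp only [Real.volume_Icc]
        have h : MPra n + ε - -(MPra n + ε) = 2 * MPra n + 2 * ε := by ring
        rw [h, Finset.prod_const, Finset.card_univ, Fintype.card_fin,
          ← ENNReal.ofReal_pow (by positivity)]
      calc ENNReal.ofReal (MPc n) * volume ((MPA n + Metric.closedBall 0 ε) ∩ MPQ n)
          ≤ ENNReal.ofReal (MPc n) * ENNReal.ofReal ((2 * MPra n + 2 * ε) ^ n) :=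
            mul_le_mul_right h2 _
        _ = ENNReal.ofReal (MPc n * (2 * MPra n + 2 * ε) ^ n) := by
            rw [← ENNReal.ofReal_mul (MPc_pos n).le]
    calc (densityMeasure (MPf n) (MPA n + Metric.closedBall 0 ε)).toReal
        ≤ (ENNReal.ofReal (MPc n * (2 * MPra n + 2 * ε) ^ n)).toReal :=
          ENNReal.toReal_mono ENNReal.ofReal_ne_top h1
      _ = MPc n * (2 * MPra n + 2 * ε) ^ n := ENNReal.toReal_ofReal
          (mul_nonneg (MPc_pos n).le (pow_nonneg (by linarith) n))
  rw [MPmuA_toReal hn, div_le_iff₀ hε]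
  have hpow : (2 * MPra n + 2 * ε) ^ n - (2 * MPra n) ^ n
      ≤ n * (2 * ε) * (2 * MPra n + 2 * ε) ^ (n - 1) := by
    have := MPpow_sub_le (a := 2 * MPra n + 2 * ε) (b := 2 * MPra n) (by linarith) (by linarith) n
    have h : 2 * MPra n + 2 * ε - 2 * MPra n = 2 * ε := by ring
    rw [h] at this
    exact this
  have hmono : (2 * MPra n + 2 * ε) ^ (n - 1) ≤ (2 * MPra n + 2) ^ (n - 1) :=
    pow_le_pow_left₀ (by linarith) (by linarith) _
  have hc := (MPc_pos n).le
  nlinarith [hub, hpow, hmono, mul_le_mul_of_nonneg_left (mul_le_mul_of_nonneg_left hmono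
    (by positivity : (0:ℝ) ≤ (n:ℝ) * (2*ε))) hc]

lemma MPquot_lower {n : ℕ} (hn : 1 ≤ n) {ε : ℝ} (hε : 0 < ε)
    (hε2 : MPra n + ε ≤ Real.sqrt 3) :
    MPc n * ((n:ℝ) * (2 * MPra n) ^ (n - 1))
      ≤ ((densityMeasure (MPf n) (MPA n + Metric.closedBall 0 ε)).toReal
          - (densityMeasure (MPf n) (MPA n)).toReal) / ε := by
  have hra := MPra_pos hn
  have hlb : (densityMeasure (MPf n) (MPA n)).toReal
        + ε * (MPc n * ((n:ℝ) * (2 * MPra n) ^ (n - 1)))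
      ≤ (densityMeasure (MPf n) (MPA n + Metric.closedBall 0 ε)).toReal := by
    have h1 : ENNReal.ofReal (MPc n * (2 * MPra n) ^ n)
          + ENNReal.ofReal (MPc n * (ε * ((n:ℝ) * (2 * MPra n) ^ (n - 1))))
        ≤ densityMeasure (MPf n) (MPA n + Metric.closedBall 0 ε) := by
      rw [MPmu_apply]
      calc ENNReal.ofReal (MPc n * (2 * MPra n) ^ n)
            + ENNReal.ofReal (MPc n * (ε * ((n:ℝ) * (2 * MPra n) ^ (n - 1))))
          = ENNReal.ofReal (MPc n) * (ENNReal.ofReal ((2 * MPra n) ^ n)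
            + ENNReal.ofReal (ε * ((n:ℝ) * (2 * MPra n) ^ (n - 1)))) := by
            rw [mul_add, ← ENNReal.ofReal_mul (MPc_pos n).le,
              ← ENNReal.ofReal_mul (MPc_pos n).le]
        _ ≤ ENNReal.ofReal (MPc n) * volume ((MPA n + Metric.closedBall 0 ε) ∩ MPQ n) :=
            mul_le_mul_right (MPvol_bound hn hε hε2) _
    have h2 := ENNReal.toReal_mono (MPmu_ne_top _) h1
    rw [ENNReal.toReal_add ENNReal.ofReal_ne_top ENNReal.ofReal_ne_top,
      ENNReal.toReal_ofReal (mul_nonneg (MPc_pos n).le (pow_nonneg (by linarith) n)),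
      ENNReal.toReal_ofReal (mul_nonneg (MPc_pos n).le (by positivity))] at h2
    rw [MPmuA_toReal hn]
    linarith [h2]
  rw [le_div_iff₀ hε]
  linarith [hlb]

lemma MPK_ge {n : ℕ} (hn : 1 ≤ n) :
    (n:ℝ) / 8 ≤ MPc n * ((n:ℝ) * (2 * MPra n) ^ (n - 1)) := by
  have hnp : (0:ℝ) < n := by exact_mod_cast hn
  have hnr : (1:ℝ) ≤ n := by exact_mod_cast hn
  have hs3 := Real.sqrt_nonneg 3
  have hs3p : (0:ℝ) < Real.sqrt 3 := Real.sqrt_pos.2 (by norm_num)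
  have hn1 : n - 1 + 1 = n := Nat.succ_pred_eq_of_pos hn
  have hsplit : 2 * MPra n = (2 * Real.sqrt 3) * (1 - 1/(2*(n:ℝ))) := by
    rw [MPra]; ring
  have hδ : 0 < 1 - 1/(2*(n:ℝ)) := by
    have : 1/(2*(n:ℝ)) ≤ 1/2 := by
      rw [div_le_div_iff₀ (by positivity) (by norm_num)]
      linarith
    linarith
  have hber : (1:ℝ)/2 ≤ (1 - 1/(2*(n:ℝ))) ^ (n - 1) := by
    have h := one_add_mul_le_pow (a := -(1/(2*(n:ℝ)))) (by
      have : 0 < 1/(2*(n:ℝ)) := by positivity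
      linarith) (n - 1)
    have hcast : ((n - 1 : ℕ):ℝ) = (n:ℝ) - 1 := by
      rw [Nat.cast_sub hn]; norm_num
    rw [hcast] at h
    have e2 : ((n:ℝ) - 1)/(2*(n:ℝ)) ≤ 1/2 := by
      rw [div_le_div_iff₀ (by positivity) (by norm_num)]
      linarith
    have e1 : 1 + ((n:ℝ) - 1) * -(1/(2*(n:ℝ))) = 1 - ((n:ℝ) - 1)/(2*(n:ℝ)) := by
      field_simp
      ring
    rw [e1] at h
    have e3 : (1:ℝ) + -(1/(2*(n:ℝ))) = 1 - 1/(2*(n:ℝ)) := by ring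
    rw [e3] at h
    linarith
  have hc_eq : MPc n * (2 * Real.sqrt 3) ^ (n - 1) = (2 * Real.sqrt 3)⁻¹ := by
    rw [MPc, ← hn1, pow_succ]
    have h1 : (2 * Real.sqrt 3) ^ (n - 1) > 0 := pow_pos MPs_pos _
    field_simp
    simp
  have hpow : (2 * MPra n) ^ (n - 1)
      = (2 * Real.sqrt 3) ^ (n - 1) * (1 - 1/(2*(n:ℝ))) ^ (n - 1) := by
    rw [hsplit, mul_pow]
  have hinv : (1:ℝ)/4 ≤ (2 * Real.sqrt 3)⁻¹ := by
    have h2 : Real.sqrt 3 ≤ 2 := by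
      have := Real.sqrt_le_sqrt (by norm_num : (3:ℝ) ≤ 4)
      have h4 : Real.sqrt 4 = 2 := by
        rw [show (4:ℝ) = 2^2 by norm_num, Real.sqrt_sq (by norm_num)]
      linarith
    have h4 : 2 * Real.sqrt 3 ≤ 4 := by linarith
    have h5 : (4:ℝ)⁻¹ ≤ (2 * Real.sqrt 3)⁻¹ := inv_anti₀ MPs_pos h4
    rw [one_div]
    exact h5
  calc (n:ℝ)/8 = (n:ℝ) * (1/4) * (1/2) := by ring
    _ ≤ (n:ℝ) * (2 * Real.sqrt 3)⁻¹ * ((1 - 1/(2*(n:ℝ))) ^ (n - 1)) := by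
        apply mul_le_mul
        · exact mul_le_mul_of_nonneg_left hinv hnp.le
        · exact hber
        · norm_num
        · positivity
    _ = MPc n * ((n:ℝ) * (2 * MPra n) ^ (n - 1)) := by
        rw [hpow, ← hc_eq]
        ring

lemma MPperim {n : ℕ} (hn : 1 ≤ n) :
    (n:ℝ)/8 ≤ muPerimeter (densityMeasure (MPf n)) (MPA n) := by
  rw [muPerimeter]
  have hδ : 0 < Real.sqrt 3 - MPra n := by linarith [MPra_lt hn]
  have hmem : Ioc (0:ℝ) (min (Real.sqrt 3 - MPra n) 1) ∈ 𝓝[>] (0:ℝ) :=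
    Ioc_mem_nhdsGT_of_mem ⟨le_refl 0, lt_min hδ one_pos⟩
  have hev : ∀ᶠ ε in 𝓝[>] (0:ℝ), (n:ℝ)/8 ≤
      ((densityMeasure (MPf n) (MPA n + Metric.closedBall 0 ε)).toReal
        - (densityMeasure (MPf n) (MPA n)).toReal) / ε := by
    filter_upwards [hmem] with ε hε
    have h1 : MPra n + ε ≤ Real.sqrt 3 := by
      have := hε.2.trans (min_le_left _ _)
      linarith
    exact (MPK_ge hn).trans (MPquot_lower hn hε.1 h1)
  have hbdd : ∀ᶠ ε in 𝓝[>] (0:ℝ),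
      ((densityMeasure (MPf n) (MPA n + Metric.closedBall 0 ε)).toReal
        - (densityMeasure (MPf n) (MPA n)).toReal) / ε
      ≤ MPc n * ((n:ℝ) * 2 * (2 * MPra n + 2) ^ (n - 1)) := by
    filter_upwards [hmem] with ε hε
    exact MPquot_upper hn hε.1 (hε.2.trans (min_le_right _ _))
  exact le_liminf_of_le (isCoboundedUnder_ge_of_eventually_le _ hbdd) hev

/-- There exist isotropic log-concave probability measures and convex bodies
with `μ`-perimeter at least `cn`. -/
theorem maximal_perimeter_lower_bound :
    ∃ c : ℝ, 0 < c ∧ ∀ n : ℕ, 1 ≤ n →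
      ∃ f : EuclideanSpace ℝ (Fin n) → ℝ, IsLogConcaveFn f ∧ IsIsotropicFn f ∧
        IsProbabilityMeasure (densityMeasure f) ∧
        ∃ A : Set (EuclideanSpace ℝ (Fin n)),
          IsCompact A ∧ Convex ℝ A ∧ (interior A).Nonempty ∧
          c * n ≤ muPerimeter (densityMeasure f) A := by
  refine ⟨1/8, by norm_num, fun n hn => ?_⟩
  refine ⟨MPf n, MPlogconcave n, ⟨MPfirst n, MPsecond n⟩, MPprob n, MPA n, MPA_compact,
    MPA_convex, MPA_interior hn, ?_⟩
  calc (1/8 : ℝ) * n = (n:ℝ)/8 := by ring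
    _ ≤ _ := MPperim hn
end

section
/- Let μ be a centered log-concave probability measure on ℝⁿ with density f, and for t ≥ 0 set R_t(μ) = {x ∈ ℝⁿ : f(x) ≥ e^{−t} f(0)}. Then for every t ≥ 3n one has μ(R_t(μ)) ≥ 1 − e^{−t/4}. -/
open MeasureTheory Filter Set Metric
open scoped Pointwise ENNReal NNReal Topology RealInnerProductSpace

section Aux

variable {n : ℕ} {f : EuclideanSpace ℝ (Fin n) → ℝ}

/-- Superlevel sets of a log-concave function are convex. -/
private lemma levelSet_convex (hf : IsLogConcaveFn f) {r : ℝ} (hr : 0 < r) :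
    Convex ℝ {x | r ≤ f x} := by
  intro x hx y hy a b ha hb hab
  have h := hf.2 x y a b ha hb hab
  have hx' : r ^ a ≤ f x ^ a := Real.rpow_le_rpow hr.le hx ha
  have hy' : r ^ b ≤ f y ^ b := Real.rpow_le_rpow hr.le hy hb
  have h1 : r ^ a * r ^ b ≤ f x ^ a * f y ^ b :=
    mul_le_mul hx' hy' (Real.rpow_nonneg hr.le b) (Real.rpow_nonneg (hr.le.trans hx) a)
  have h2 : r ^ a * r ^ b = r := by
    rw [← Real.rpow_add hr, hab, Real.rpow_one]
  exact le_trans (le_trans h2.ge h1) h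

/-- Scaling a point of a superlevel set towards the origin. -/
private lemma smul_mem_levelSet (hf : IsLogConcaveFn f) (hc : 0 < f 0)
    {u s : ℝ} (hu : 0 < u) (hus : u ≤ s) {x : EuclideanSpace ℝ (Fin n)}
    (hx : Real.exp (-s) * f 0 ≤ f x) :
    Real.exp (-u) * f 0 ≤ f ((u / s) • x) := by
  have hs : 0 < s := hu.trans_le hus
  set a := u / s with ha
  have ha0 : 0 < a := div_pos hu hs
  have ha1 : a ≤ 1 := (div_le_one hs).2 hus
  have key := hf.2 x 0 a (1 - a) ha0.le (by linarith) (by ring)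
  rw [smul_zero, add_zero] at key
  have hfx0 : 0 ≤ Real.exp (-s) * f 0 := by positivity
  have h1 : (Real.exp (-s) * f 0) ^ a * f 0 ^ (1 - a) ≤ f x ^ a * f 0 ^ (1 - a) :=
    mul_le_mul_of_nonneg_right (Real.rpow_le_rpow hfx0 hx ha0.le) (Real.rpow_nonneg hc.le _)
  have h2 : (Real.exp (-s) * f 0) ^ a * f 0 ^ (1 - a) = Real.exp (-u) * f 0 := by
    rw [Real.mul_rpow (Real.exp_nonneg _) hc.le, mul_assoc, ← Real.rpow_add hc]
    have h3 : a + (1 - a) = 1 := by ring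
    rw [h3, Real.rpow_one, ← Real.exp_mul]
    have h4 : -s * a = -u := by
      rw [ha]
      field_simp
    rw [h4]
  linarith [le_trans h1 key]

private lemma dens_le {A : Set (EuclideanSpace ℝ (Fin n))}
    (hA : NullMeasurableSet A (volume : Measure (EuclideanSpace ℝ (Fin n))))
    {M : ℝ} (hbd : ∀ x ∈ A, f x ≤ M) :
    densityMeasure f A ≤ ENNReal.ofReal M * volume A := by
  set T := toMeasurable volume A with hT
  have hTm : MeasurableSet T := measurableSet_toMeasurable _ _
  have hae : (T : Set _) =ᵐ[(volume : Measure (EuclideanSpace ℝ (Fin n)))] A :=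
    hA.toMeasurable_ae_eq
  have hTA : volume (T \ A) = 0 := (ae_eq_set.1 hae).1
  have h1 : ∀ᵐ x ∂(volume : Measure (EuclideanSpace ℝ (Fin n))).restrict T, x ∈ A := by
    rw [ae_iff, Measure.restrict_apply' hTm]
    have heq : {a : EuclideanSpace ℝ (Fin n) | ¬ a ∈ A} ∩ T = T \ A := by
      ext z; simp only [Set.mem_inter_iff, Set.mem_setOf_eq, Set.mem_diff]; tauto
    rw [heq]; exact hTA
  calc densityMeasure f A ≤ densityMeasure f T := measure_mono (subset_toMeasurable _ _)
    _ = ∫⁻ x in T, ENNReal.ofReal (f x) ∂volume := withDensity_apply _ hTm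
    _ ≤ ∫⁻ _x in T, ENNReal.ofReal M ∂volume :=
        lintegral_mono_ae (h1.mono fun x hx => ENNReal.ofReal_le_ofReal (hbd x hx))
    _ = ENNReal.ofReal M * volume T := setLIntegral_const _ _
    _ = ENNReal.ofReal M * volume A := by rw [measure_toMeasurable]

private lemma dens_ge {A : Set (EuclideanSpace ℝ (Fin n))}
    (hA : NullMeasurableSet A (volume : Measure (EuclideanSpace ℝ (Fin n))))
    {M : ℝ} (hbd : ∀ x ∈ A, M ≤ f x) :
    ENNReal.ofReal M * volume A ≤ densityMeasure f A := by
  obtain ⟨T, hTA, hTm, hae⟩ := hA.exists_measurable_subset_ae_eq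
  calc ENNReal.ofReal M * volume A = ENNReal.ofReal M * volume T := by
        rw [measure_congr hae]
    _ = ∫⁻ _x in T, ENNReal.ofReal M ∂volume := (setLIntegral_const _ _).symm
    _ ≤ ∫⁻ x in T, ENNReal.ofReal (f x) ∂volume :=
        lintegral_mono_ae ((ae_restrict_mem hTm).mono fun x hx =>
          ENNReal.ofReal_le_ofReal (hbd x (hTA hx)))
    _ = densityMeasure f T := (withDensity_apply _ hTm).symm
    _ ≤ densityMeasure f A := measure_mono hTA

private lemma pow_one_add_le {x : ℝ} (hx : 0 ≤ x) (m : ℕ) {b : ℝ} (hb : (m : ℝ) * x ≤ b) :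
    (1 + x) ^ m ≤ Real.exp b := by
  have h1 : (1 + x) ^ m ≤ Real.exp x ^ m :=
    pow_le_pow_left₀ (by linarith) (by linarith [Real.add_one_le_exp x]) m
  have h2 : Real.exp x ^ m = Real.exp ((m : ℝ) * x) := (Real.exp_nat_mul x m).symm
  calc (1 + x) ^ m ≤ Real.exp ((m : ℝ) * x) := h1.trans_eq h2
    _ ≤ Real.exp b := Real.exp_le_exp.2 hb

end Aux

set_option maxHeartbeats 1000000 in
/-- For a centered log-concave probability measure `μ` on `ℝⁿ` with density `f`,
the super-level set `R_t(μ) = {x : f(x) ≥ e^{−t} f(0)}` has `μ(R_t(μ)) ≥ 1 − e^{−t/4}`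
for every `t ≥ 3n`. -/
theorem levelset_measure_bound {n : ℕ} (f : EuclideanSpace ℝ (Fin n) → ℝ)
    (hf : IsLogConcaveFn f) (hcent : (∫ x, f x • x) = 0)
    (hprob : IsProbabilityMeasure (densityMeasure f))
    (t : ℝ) (ht : 3 * n ≤ t) :
    1 - Real.exp (-t / 4) ≤
      (densityMeasure f {x | Real.exp (-t) * f 0 ≤ f x}).toReal := by
  classical
  have hfnn := hf.1
  by_cases hcpos : 0 < f 0
  case neg =>
    have hc0 : f 0 = 0 := le_antisymm (not_lt.1 hcpos) (hfnn 0)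
    have hU : {x | Real.exp (-t) * f 0 ≤ f x} = Set.univ := by
      ext x; simp [hc0, hfnn x]
    rw [hU, measure_univ, ENNReal.toReal_one]
    have := Real.exp_pos (-t / 4); linarith
  by_cases hn0 : n = 0
  · subst hn0
    have hU : {x | Real.exp (-t) * f 0 ≤ f x} = Set.univ := by
      ext x
      have hx0 : x = 0 := Subsingleton.elim x 0
      have ht0 : (0:ℝ) ≤ t := by simpa using ht
      have hexp1 : Real.exp (-t) ≤ 1 := Real.exp_le_one_iff.2 (by linarith)
      simp only [Set.mem_setOf_eq, Set.mem_univ, iff_true, hx0]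
      nlinarith [hfnn (0 : EuclideanSpace ℝ (Fin 0))]
    rw [hU, measure_univ, ENNReal.toReal_one]
    have := Real.exp_pos (-t / 4); linarith
  -- main case
  have hn1 : (1:ℝ) ≤ n := by exact_mod_cast Nat.one_le_iff_ne_zero.2 hn0
  have hnpos : (0:ℝ) < n := by linarith
  have ht3 : (3:ℝ) ≤ t := by nlinarith
  have htpos : (0:ℝ) < t := by linarith
  have hnt : (n:ℝ) ≤ t := by nlinarith
  haveI : (volume : Measure (EuclideanSpace ℝ (Fin n))).IsAddHaarMeasure := by
    rw [← (EuclideanSpace.basisFun (Fin n) ℝ).addHaar_eq_volume]; infer_instance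
  set c := f 0 with hc
  set L : ℝ → Set (EuclideanSpace ℝ (Fin n)) := fun s => {x | Real.exp (-s) * c ≤ f x}
    with hLdef
  have hconv : ∀ s : ℝ, Convex ℝ (L s) := fun s => levelSet_convex hf (by positivity)
  have hnm : ∀ s : ℝ, NullMeasurableSet (L s)
      (volume : Measure (EuclideanSpace ℝ (Fin n))) :=
    fun s => (hconv s).nullMeasurableSet volume
  have hLmono : ∀ {u s : ℝ}, u ≤ s → L u ⊆ L s := by
    intro u s hus x hx
    have h1 : Real.exp (-s) * c ≤ Real.exp (-u) * c :=
      mul_le_mul_of_nonneg_right (Real.exp_le_exp.2 (by linarith)) hcpos.le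
    exact le_trans h1 hx
  have huniv : densityMeasure f Set.univ = 1 := hprob.measure_univ
  have hVlow : ∀ s : ℝ, ENNReal.ofReal (Real.exp (-s) * c) * volume (L s) ≤ 1 := by
    intro s
    calc ENNReal.ofReal (Real.exp (-s) * c) * volume (L s) ≤ densityMeasure f (L s) :=
          dens_ge (hnm s) (fun x hx => hx)
      _ ≤ densityMeasure f Set.univ := measure_mono (Set.subset_univ _)
      _ = 1 := huniv
  have hVfin : ∀ s : ℝ, volume (L s) ≠ ∞ := by
    intro s hcon
    have hpos : (0:ℝ) < Real.exp (-s) * c := by positivity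
    have h1 := hVlow s
    rw [hcon, ENNReal.mul_top (ENNReal.ofReal_pos.2 hpos).ne'] at h1
    simp at h1
  set W : ℝ → ℝ := fun s => (volume (L s)).toReal with hWdef
  have hWnn : ∀ s : ℝ, 0 ≤ W s := fun s => ENNReal.toReal_nonneg
  have hW2 : ∀ s : ℝ, c * W s ≤ Real.exp s := by
    intro s
    have h1 := hVlow s
    have h2 : Real.exp (-s) * c * W s ≤ 1 := by
      have h3 := ENNReal.toReal_mono ENNReal.one_ne_top h1
      rwa [ENNReal.toReal_mul, ENNReal.toReal_ofReal (by positivity), ENNReal.toReal_one]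
        at h3
    have h3 : c * W s = (Real.exp (-s) * c * W s) * Real.exp s := by
      rw [Real.exp_neg]; field_simp
    rw [h3]
    calc (Real.exp (-s) * c * W s) * Real.exp s ≤ 1 * Real.exp s :=
          mul_le_mul_of_nonneg_right h2 (Real.exp_pos s).le
      _ = Real.exp s := one_mul _
  have hW3 : ∀ u s : ℝ, 0 < u → u ≤ s → (u / s) ^ n * W s ≤ W u := by
    intro u s hu hus
    have hs : 0 < s := hu.trans_le hus
    have hsub : (u / s) • L s ⊆ L u := by
      rintro y ⟨x, hx, rfl⟩
      exact smul_mem_levelSet hf hcpos hu hus hx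
    have h1 : volume ((u / s) • L s) ≤ volume (L u) := measure_mono hsub
    rw [Measure.addHaar_smul volume, finrank_euclideanSpace_fin,
      abs_of_nonneg (by positivity : (0:ℝ) ≤ (u / s) ^ n)] at h1
    have h2 := ENNReal.toReal_mono (hVfin u) h1
    rwa [ENNReal.toReal_mul, ENNReal.toReal_ofReal (by positivity)] at h2
  have hW4 : ∀ u s : ℝ, 0 < u → u ≤ s → W s ≤ (s / u) ^ n * W u := by
    intro u s hu hus
    have hs : 0 < s := hu.trans_le hus
    have h := hW3 u s hu hus
    have hprod : (s / u) ^ n * (u / s) ^ n = 1 := by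
      rw [← mul_pow]
      rw [div_mul_div_comm]
      rw [mul_comm s u]
      rw [div_self (by positivity)]
      exact one_pow n
    have h2 := mul_le_mul_of_nonneg_left h (by positivity : (0:ℝ) ≤ (s / u) ^ n)
    rwa [← mul_assoc, hprod, one_mul] at h2
  -- existence of shells
  have hsmall : ∀ x, 0 < f x → ∃ m : ℕ, Real.exp (-(m:ℝ)) * c ≤ f x := by
    intro x h0
    obtain ⟨m, hm⟩ := exists_nat_ge (Real.log (c / f x))
    refine ⟨m, ?_⟩
    have hcf : (0:ℝ) < c / f x := div_pos hcpos h0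
    have h1 : Real.exp (-(m:ℝ)) ≤ Real.exp (-Real.log (c / f x)) :=
      Real.exp_le_exp.2 (by linarith)
    have h2 : Real.exp (-Real.log (c / f x)) * c ≤ f x := by
      rw [Real.exp_neg, Real.exp_log hcf, inv_div]
      rw [div_mul_cancel₀ _ hcpos.ne']
    calc Real.exp (-(m:ℝ)) * c ≤ Real.exp (-Real.log (c / f x)) * c :=
          mul_le_mul_of_nonneg_right h1 hcpos.le
      _ ≤ f x := h2
  set S : ℕ → Set (EuclideanSpace ℝ (Fin n)) := fun k => L (t + k + 1) \ L (t + k)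
    with hSdef
  have hSnm : ∀ k : ℕ, NullMeasurableSet (S k)
      (volume : Measure (EuclideanSpace ℝ (Fin n))) :=
    fun k => (hnm _).diff (hnm _)
  have hScover : (L t)ᶜ ⊆ {x | f x ≤ 0} ∪ ⋃ k : ℕ, S k := by
    intro x hx
    rcases le_or_gt (f x) 0 with h0 | h0
    · exact Or.inl h0
    · right
      have hex : ∃ k : ℕ, x ∈ L (t + k + 1) := by
        obtain ⟨m, hm⟩ := hsmall x h0
        refine ⟨m, ?_⟩
        show Real.exp (-(t + m + 1)) * c ≤ f x
        have h1 : Real.exp (-(t + m + 1)) ≤ Real.exp (-(m:ℝ)) :=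
          Real.exp_le_exp.2 (by linarith)
        calc Real.exp (-(t + m + 1)) * c ≤ Real.exp (-(m:ℝ)) * c :=
              mul_le_mul_of_nonneg_right h1 hcpos.le
          _ ≤ f x := hm
      set k0 := Nat.find hex with hk0
      refine Set.mem_iUnion.2 ⟨k0, Nat.find_spec hex, ?_⟩
      show x ∉ L (t + k0)
      match hk00 : k0 with
      | 0 => 
        intro hmem
        apply hx
        have : (t + ((0:ℕ):ℝ)) = t := by push_cast; ring
        rw [this] at hmem
        exact hmem
      | Nat.succ m =>
        have hmin : ¬ x ∈ L (t + m + 1) := Nat.find_min hex (by omega)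
        intro hmem
        apply hmin
        have : (t + ((Nat.succ m : ℕ):ℝ)) = t + m + 1 := by push_cast; ring
        rw [this] at hmem
        exact hmem
  have hZ : densityMeasure f {x | f x ≤ 0} = 0 := by
    have hZeq : {x | f x ≤ 0} = (⋃ k : ℕ, L ((k:ℝ)))ᶜ := by
      ext x
      simp only [Set.mem_compl_iff, Set.mem_iUnion, Set.mem_setOf_eq, not_exists]
      constructor
      · intro h0 k hk
        have : (0:ℝ) < Real.exp (-(k:ℝ)) * c := by positivity
        have hk' : Real.exp (-(k:ℝ)) * c ≤ f x := hk
        linarith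
      · intro h
        by_contra hlt
        push_neg at hlt
        obtain ⟨m, hm⟩ := hsmall x hlt
        exact h m hm
    have hZnm : NullMeasurableSet {x | f x ≤ 0}
        (volume : Measure (EuclideanSpace ℝ (Fin n))) := by
      rw [hZeq]
      exact (NullMeasurableSet.iUnion fun k => hnm _).compl
    have h1 := dens_le (f := f) hZnm (M := 0) (fun x hx => hx)
    simpa using h1
  have hSle : ∀ k : ℕ, densityMeasure f (S k) ≤
      ENNReal.ofReal (Real.exp (-(t + k)) * c * (W (t + k + 1) - W (t + k))) := by
    intro k
    have hbd : ∀ x ∈ S k, f x ≤ Real.exp (-(t + k)) * c := by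
      intro x hx
      exact le_of_lt (not_le.1 hx.2)
    have h1 := dens_le (f := f) (hSnm k) hbd
    have hdisj : Disjoint (L (t + k)) (S k) := disjoint_sdiff_self_right
    have hunion : volume (L (t + k) ∪ S k) = volume (L (t + k)) + volume (S k) :=
      measure_union₀ (hSnm k) hdisj.aedisjoint
    have hsub2 : L (t + k) ∪ S k ⊆ L (t + k + 1) :=
      Set.union_subset (hLmono (by linarith)) Set.diff_subset
    have h2 : volume (L (t + k)) + volume (S k) ≤ volume (L (t + k + 1)) := by
      rw [← hunion]; exact measure_mono hsub2
    have hSfin : volume (S k) ≠ ∞ :=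
      ne_top_of_le_ne_top (hVfin (t + k + 1)) (measure_mono Set.diff_subset)
    have h3 : W (t + k) + (volume (S k)).toReal ≤ W (t + k + 1) := by
      have h4 := ENNReal.toReal_mono (hVfin (t + k + 1)) h2
      rwa [ENNReal.toReal_add (hVfin _) hSfin] at h4
    have h4 : volume (S k) ≤ ENNReal.ofReal (W (t + k + 1) - W (t + k)) := by
      rw [← ENNReal.ofReal_toReal hSfin]
      exact ENNReal.ofReal_le_ofReal (by linarith)
    calc densityMeasure f (S k) ≤ ENNReal.ofReal (Real.exp (-(t + k)) * c) * volume (S k) :=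
          h1
      _ ≤ ENNReal.ofReal (Real.exp (-(t + k)) * c) *
            ENNReal.ofReal (W (t + k + 1) - W (t + k)) := mul_le_mul_right h4 _
      _ = ENNReal.ofReal (Real.exp (-(t + k)) * c * (W (t + k + 1) - W (t + k))) :=
          (ENNReal.ofReal_mul (by positivity)).symm
  -- the real-valued geometric bound
  set Cst := (Real.exp 3⁻¹ - 1) * ((t / n) ^ n * Real.exp (n:ℝ)) * Real.exp (-t) with hCst
  have hexp13 : (1:ℝ) ≤ Real.exp 3⁻¹ := Real.one_le_exp_iff.2 (by norm_num)
  have hCstnn : 0 ≤ Cst := by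
    rw [hCst]
    have h0 : (0:ℝ) ≤ (t / n) ^ n * Real.exp (n:ℝ) := by positivity
    exact mul_nonneg (mul_nonneg (by linarith) h0) (Real.exp_pos _).le
  have hbk : ∀ k : ℕ, Real.exp (-(t + k)) * c * (W (t + k + 1) - W (t + k)) ≤
      Cst * Real.exp (-(2/3) * k) := by
    intro k
    have hk0 : (0:ℝ) ≤ k := Nat.cast_nonneg k
    have htk : (0:ℝ) < t + k := by linarith
    -- (i)
    have hi : W (t + k + 1) ≤ Real.exp 3⁻¹ * W (t + k) := by
      have h := hW4 (t + k) (t + k + 1) htk (by linarith)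
      have heq : (t + k + 1) / (t + k) = 1 + 1 / (t + k) := by field_simp
      have hr : ((t + k + 1) / (t + k)) ^ n ≤ Real.exp 3⁻¹ := by
        rw [heq]
        apply pow_one_add_le (by positivity) n
        rw [mul_one_div, div_le_iff₀ htk]
        nlinarith
      calc W (t + k + 1) ≤ ((t + k + 1) / (t + k)) ^ n * W (t + k) := h
        _ ≤ Real.exp 3⁻¹ * W (t + k) := mul_le_mul_of_nonneg_right hr (hWnn _)
    -- (ii)
    have hii : c * W (t + k) ≤ ((t + k) / n) ^ n * Real.exp (n:ℝ) := by
      have h := hW4 (n:ℝ) (t + k) hnpos (by linarith)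
      have h2 := hW2 (n:ℝ)
      calc c * W (t + k) ≤ c * (((t + k) / n) ^ n * W (n:ℝ)) :=
            mul_le_mul_of_nonneg_left h hcpos.le
        _ = ((t + k) / n) ^ n * (c * W (n:ℝ)) := by ring
        _ ≤ ((t + k) / n) ^ n * Real.exp (n:ℝ) :=
            mul_le_mul_of_nonneg_left h2 (by positivity)
    -- (iii)
    have hiii : ((t + k) / n) ^ n ≤ (t / n) ^ n * Real.exp (3⁻¹ * k) := by
      have heq : (t + k) / n = (t / n) * (1 + k / t) := by field_simp
      rw [heq, mul_pow]
      apply mul_le_mul_of_nonneg_left _ (by positivity)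
      apply pow_one_add_le (by positivity) n
      rw [mul_div_assoc']
      rw [div_le_iff₀ htpos]
      nlinarith
    have hstep1 : c * (W (t + k + 1) - W (t + k)) ≤ (Real.exp 3⁻¹ - 1) * (c * W (t + k)) := by
      nlinarith [mul_le_mul_of_nonneg_left hi hcpos.le]
    have hstep2 : (Real.exp 3⁻¹ - 1) * (c * W (t + k)) ≤
        (Real.exp 3⁻¹ - 1) * ((t / n) ^ n * Real.exp (3⁻¹ * k) * Real.exp (n:ℝ)) := by
      apply mul_le_mul_of_nonneg_left _ (by linarith)
      calc c * W (t + k) ≤ ((t + k) / n) ^ n * Real.exp (n:ℝ) := hii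
        _ ≤ (t / n) ^ n * Real.exp (3⁻¹ * k) * Real.exp (n:ℝ) :=
            mul_le_mul_of_nonneg_right hiii (Real.exp_pos _).le
    have hexpfold : Real.exp (-(t + k)) * Real.exp (3⁻¹ * k) =
        Real.exp (-t) * Real.exp (-(2/3) * k) := by
      rw [← Real.exp_add, ← Real.exp_add]
      ring_nf
    calc Real.exp (-(t + k)) * c * (W (t + k + 1) - W (t + k))
        = Real.exp (-(t + k)) * (c * (W (t + k + 1) - W (t + k))) := by ring
      _ ≤ Real.exp (-(t + k)) * ((Real.exp 3⁻¹ - 1) * (c * W (t + k))) :=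
          mul_le_mul_of_nonneg_left hstep1 (Real.exp_pos _).le
      _ ≤ Real.exp (-(t + k)) *
            ((Real.exp 3⁻¹ - 1) * ((t / n) ^ n * Real.exp (3⁻¹ * k) * Real.exp (n:ℝ))) :=
          mul_le_mul_of_nonneg_left hstep2 (Real.exp_pos _).le
      _ = ((Real.exp 3⁻¹ - 1) * ((t / n) ^ n * Real.exp (n:ℝ))) *
            (Real.exp (-(t + k)) * Real.exp (3⁻¹ * k)) := by ring
      _ = Cst * Real.exp (-(2/3) * k) := by rw [hexpfold, hCst]; ring
  -- summability and the sum
  have hgeom : ∀ k : ℕ, Real.exp (-(2/3) * (k:ℝ)) = Real.exp (-(2/3)) ^ k := by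
    intro k
    rw [mul_comm, Real.exp_nat_mul]
  have hq0 : (0:ℝ) ≤ Real.exp (-(2/3)) := (Real.exp_pos _).le
  have hq1 : Real.exp (-(2/3)) < 1 := Real.exp_lt_one_iff.2 (by norm_num)
  have hsummable : Summable (fun k : ℕ => Cst * Real.exp (-(2/3) * (k:ℝ))) := by
    have h1 : (fun k : ℕ => Cst * Real.exp (-(2/3) * (k:ℝ))) =
        fun k : ℕ => Cst * Real.exp (-(2/3)) ^ k := by
      funext k; rw [hgeom k]
    rw [h1]
    exact (summable_geometric_of_lt_one hq0 hq1).mul_left Cst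
  have htsum : ∑' k : ℕ, Cst * Real.exp (-(2/3) * (k:ℝ)) =
      Cst * (1 - Real.exp (-(2/3)))⁻¹ := by
    have h1 : (fun k : ℕ => Cst * Real.exp (-(2/3) * (k:ℝ))) =
        fun k : ℕ => Cst * Real.exp (-(2/3)) ^ k := by
      funext k; rw [hgeom k]
    rw [h1, tsum_mul_left, tsum_geometric_of_lt_one hq0 hq1]
  -- numeric step A
  have hA : Real.exp 3⁻¹ - 1 ≤ 1 - Real.exp (-(2/3)) := by
    set y := Real.exp 3⁻¹ with hy
    have hy0 : (0:ℝ) < y := Real.exp_pos _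
    have hy3 : y ^ 3 = Real.exp 1 := by
      rw [hy, ← Real.exp_nat_mul]; norm_num
    have hylb : (4:ℝ)/3 ≤ y := by
      have := Real.add_one_le_exp (3⁻¹:ℝ); rw [hy]; linarith
    have hyub : y ≤ 10/7 := by
      nlinarith [Real.exp_one_lt_d9, hy3, hy0, sq_nonneg (y - 10/7), sq_nonneg (y + 10/7)]
    have hinv : Real.exp (-(2/3)) * y ^ 2 = 1 := by
      have h1 : y ^ 2 = Real.exp (2/3) := by
        rw [hy, ← Real.exp_nat_mul]; norm_num
      rw [h1, ← Real.exp_add]; norm_num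
    have hE : Real.exp (-(2/3)) = 1 / y ^ 2 := by
      field_simp at hinv ⊢
      linarith [hinv]
    have hkey : 0 ≤ 2 * y ^ 2 - y ^ 3 - 1 := by
      nlinarith [mul_nonneg (sub_nonneg.2 hylb) (sub_nonneg.2 hyub)]
    have h2y : 1 / y ^ 2 ≤ 2 - y := by
      rw [div_le_iff₀ (by positivity)]
      nlinarith
    rw [hE]
    linarith
  -- numeric step B
  have hB : (t / n) ^ n * Real.exp (n:ℝ) ≤ Real.exp (3 * t / 4) := by
    set τ := t / n with hτ
    have hτ3 : (3:ℝ) ≤ τ := by rw [hτ, le_div_iff₀ hnpos]; linarith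
    have hτpos : (0:ℝ) < τ := by linarith
    have hkey : Real.exp 1 * τ ≤ Real.exp (3 * τ / 4) := by
      have h1 : τ / 3 ≤ Real.exp (τ / 3 - 1) := by
        have := Real.add_one_le_exp (τ / 3 - 1); linarith
      have h22 : (3:ℝ) ≤ Real.exp (5/4 : ℝ) := by
        have ha : Real.exp (5/4 : ℝ) = Real.exp 1 * Real.exp (4⁻¹ : ℝ) := by
          rw [← Real.exp_add]; norm_num
        have hb := Real.add_one_le_exp (4⁻¹:ℝ)
        have hcc := Real.exp_one_gt_d9
        rw [ha]; nlinarith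
      have h2 : (3:ℝ) ≤ Real.exp (5 * τ / 12) := by
        have h21 : Real.exp (5/4 : ℝ) ≤ Real.exp (5 * τ / 12) :=
          Real.exp_le_exp.2 (by linarith)
        linarith
      have h3 : τ ≤ Real.exp (5 * τ / 12) * Real.exp (τ / 3 - 1) := by
        nlinarith [Real.exp_pos (τ / 3 - 1)]
      have h4 : Real.exp (5 * τ / 12) * Real.exp (τ / 3 - 1) = Real.exp (3 * τ / 4 - 1) := by
        rw [← Real.exp_add]; ring_nf
      have h5 : Real.exp 1 * Real.exp (3 * τ / 4 - 1) = Real.exp (3 * τ / 4) := by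
        rw [← Real.exp_add]; ring_nf
      calc Real.exp 1 * τ ≤ Real.exp 1 * Real.exp (3 * τ / 4 - 1) := by
            apply mul_le_mul_of_nonneg_left _ (Real.exp_pos 1).le
            rw [← h4]; exact h3
        _ = Real.exp (3 * τ / 4) := h5
    have hτn : (t / n) ^ n * Real.exp (n:ℝ) = (Real.exp 1 * τ) ^ n := by
      rw [mul_pow, ← Real.exp_nat_mul, mul_one, hτ]
      ring
    have hpow : (Real.exp 1 * τ) ^ n ≤ Real.exp (3 * τ / 4) ^ n :=
      pow_le_pow_left₀ (by positivity) hkey n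
    have hlast : Real.exp (3 * τ / 4) ^ n = Real.exp (3 * t / 4) := by
      rw [← Real.exp_nat_mul]
      congr 1
      rw [hτ]; field_simp
    calc (t / n) ^ n * Real.exp (n:ℝ) = (Real.exp 1 * τ) ^ n := hτn
      _ ≤ Real.exp (3 * τ / 4) ^ n := hpow
      _ = Real.exp (3 * t / 4) := hlast
  have hpos1q : (0:ℝ) < 1 - Real.exp (-(2/3)) := by linarith
  have hfold : Real.exp (3 * t / 4) * Real.exp (-t) = Real.exp (-t / 4) := by
    rw [← Real.exp_add]; ring_nf
  have hfinal : ∑' k : ℕ, Cst * Real.exp (-(2/3) * (k:ℝ)) ≤ Real.exp (-t / 4) := by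
    rw [htsum]
    have hdiv : (Real.exp 3⁻¹ - 1) * (1 - Real.exp (-(2/3)))⁻¹ ≤ 1 := by
      have h1 : (Real.exp 3⁻¹ - 1) / (1 - Real.exp (-(2/3))) ≤ 1 :=
        (div_le_one hpos1q).2 hA
      rwa [div_eq_mul_inv] at h1
    calc Cst * (1 - Real.exp (-(2/3)))⁻¹
        = ((Real.exp 3⁻¹ - 1) * (1 - Real.exp (-(2/3)))⁻¹) *
            (((t / n) ^ n * Real.exp (n:ℝ)) * Real.exp (-t)) := by rw [hCst]; ring
      _ ≤ 1 * (Real.exp (3 * t / 4) * Real.exp (-t)) := by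
          apply mul_le_mul hdiv (mul_le_mul_of_nonneg_right hB (Real.exp_pos _).le)
            (by positivity) (by norm_num)
      _ = Real.exp (-t / 4) := by rw [one_mul, hfold]
  -- sum up the measure bound
  have hsum : densityMeasure f ((L t)ᶜ) ≤ ENNReal.ofReal (Real.exp (-t / 4)) := by
    calc densityMeasure f ((L t)ᶜ)
        ≤ densityMeasure f ({x | f x ≤ 0} ∪ ⋃ k : ℕ, S k) := measure_mono hScover
      _ ≤ densityMeasure f {x | f x ≤ 0} + densityMeasure f (⋃ k : ℕ, S k) :=
          measure_union_le _ _
      _ = densityMeasure f (⋃ k : ℕ, S k) := by rw [hZ, zero_add]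
      _ ≤ ∑' k : ℕ, densityMeasure f (S k) := measure_iUnion_le _
      _ ≤ ∑' k : ℕ, ENNReal.ofReal (Cst * Real.exp (-(2/3) * (k:ℝ))) :=
          ENNReal.tsum_le_tsum fun k =>
            le_trans (hSle k) (ENNReal.ofReal_le_ofReal (hbk k))
      _ = ENNReal.ofReal (∑' k : ℕ, Cst * Real.exp (-(2/3) * (k:ℝ))) :=
          (ENNReal.ofReal_tsum_of_nonneg
            (fun k => mul_nonneg hCstnn (Real.exp_pos _).le) hsummable).symm
      _ ≤ ENNReal.ofReal (Real.exp (-t / 4)) := ENNReal.ofReal_le_ofReal hfinal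
  -- conclusion
  have hcompl : (1:ℝ≥0∞) ≤ densityMeasure f (L t) + densityMeasure f ((L t)ᶜ) := by
    calc (1:ℝ≥0∞) = densityMeasure f Set.univ := huniv.symm
      _ = densityMeasure f (L t ∪ (L t)ᶜ) := by rw [Set.union_compl_self]
      _ ≤ densityMeasure f (L t) + densityMeasure f ((L t)ᶜ) := measure_union_le _ _
  have hge : 1 - ENNReal.ofReal (Real.exp (-t / 4)) ≤ densityMeasure f (L t) :=
    tsub_le_iff_right.2 (le_trans hcompl (add_le_add_right hsum _))
  have h7 : (1 - ENNReal.ofReal (Real.exp (-t / 4))).toReal ≤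
      (densityMeasure f (L t)).toReal :=
    ENNReal.toReal_mono (measure_ne_top _ _) hge
  have h8 : 1 - Real.exp (-t / 4) ≤ (1 - ENNReal.ofReal (Real.exp (-t / 4))).toReal := by
    rcases le_or_gt 1 (Real.exp (-t / 4)) with hcase | hcase
    · have h9 : (1:ℝ) - Real.exp (-t / 4) ≤ 0 := by linarith
      exact le_trans h9 ENNReal.toReal_nonneg
    · rw [ENNReal.toReal_sub_of_le (ENNReal.ofReal_le_one.2 hcase.le) ENNReal.one_ne_top,
        ENNReal.toReal_one, ENNReal.toReal_ofReal (Real.exp_pos _).le]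
  have hLt : {x | Real.exp (-t) * c ≤ f x} = L t := rfl
  calc 1 - Real.exp (-t / 4) ≤ (1 - ENNReal.ofReal (Real.exp (-t / 4))).toReal := h8
    _ ≤ (densityMeasure f (L t)).toReal := h7
end

section
/- Let n ≥ 2 and let μ be an isotropic log-concave probability measure on ℝⁿ whose density is radial of the form f(x) = e^{−g(|x|)}, where g : [0,∞) → ℝ is continuously differentiable and x ↦ g(|x|) is convex on ℝⁿ. Then ∫_{ℝⁿ} g'(|x|) dμ(x) ≤ √(n+1). (Since ∇ψ(x) = g'(|x|)·x/|x| for ψ(x) = g(|x|), this says ∫ |∇ψ| dμ ≤ √(n+1).) -/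
open MeasureTheory Filter Set Metric
open scoped Pointwise ENNReal NNReal Topology RealInnerProductSpace

/-!
In polar coordinates `μ` is the measure `|Sⁿ⁻¹| rⁿ⁻¹ e^{-g(r)} dr` on `(0, ∞)`, and isotropy
fixes its second moment to be `n`. Integrating by parts, `∫ g'(|x|) dμ ≤ (n - 1) ∫ |x|⁻¹ dμ`,
since `g' ≥ 0` and the boundary term has the right sign. To bound the right-hand side, compare
`e^{-g}` with the exponential `C e^{-l r}`, `l = √(n + 1)`, having the same moments of orders
`n - 1` and `n + 1`, for which the bound is an equality. As `g` is convex, the difference changes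
sign at most twice, following the pattern `-, +, -`; integrating it against
`r^{n-2} (r - a) (r - b) (r + a + b)`, which vanishes at the sign changes and has no `r^{n}` term,
shows that its moment of order `n - 2` is nonpositive.
-/

open Real
open scoped Nat

lemma integral_pow_mul_exp_neg_mul_Ioi (k : ℕ) {l : ℝ} (hl : 0 < l) :
    ∫ t in Ioi (0 : ℝ), t ^ k * exp (-(l * t)) = k ! / l ^ (k + 1) := by
  have h := integral_rpow_mul_exp_neg_mul_Ioi (a := k + 1) (by positivity) hl
  simp only [add_sub_cancel_right, rpow_natCast] at h
  rw [h, Gamma_nat_eq_factorial, ← Nat.cast_succ, rpow_natCast, Nat.succ_eq_add_one, div_pow,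
    one_pow, one_div_mul_eq_div]

lemma integrableOn_pow_mul_exp_neg_mul_Ioi (k : ℕ) {l : ℝ} (hl : 0 < l) :
    IntegrableOn (fun t => t ^ k * exp (-(l * t))) (Ioi 0) :=
  .of_integral_ne_zero (by rw [integral_pow_mul_exp_neg_mul_Ioi k hl]; positivity)

section Moments

variable {p : ℕ} {D : ℝ → ℝ}

/-- The cubic `(t - a) (t - b) (t + a + b)` has no quadratic term, so against the moments
`p + 1` and `p + 3` of `D` only its constant term `a b (a + b)` survives. -/
lemma setIntegral_pow_mul_nonpos_of_cubic {a b ε : ℝ} (hε : ε ≠ 0)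
    (hκ : 0 ≤ ε * (a * b * (a + b)))
    (h0 : IntegrableOn (fun t => t ^ p * D t) (Ioi 0))
    (h1 : IntegrableOn (fun t => t ^ (p + 1) * D t) (Ioi 0))
    (h3 : IntegrableOn (fun t => t ^ (p + 3) * D t) (Ioi 0))
    (hm1 : ∫ t in Ioi 0, t ^ (p + 1) * D t = 0) (hm3 : ∫ t in Ioi 0, t ^ (p + 3) * D t = 0)
    (hsign : ∀ t > 0, ε * ((t - a) * (t - b) * (t + a + b)) * D t ≤ 0) :
    ∫ t in Ioi 0, t ^ p * D t ≤ 0 := by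
  set F : ℝ → ℝ := fun t => t ^ p * (ε * ((t - a) * (t - b) * (t + a + b)) * D t)
  have hF_eq : F = fun t => ε * (t ^ (p + 3) * D t - (a ^ 2 + a * b + b ^ 2) * (t ^ (p + 1) * D t)
      + a * b * (a + b) * (t ^ p * D t)) := by
    funext t; simp only [F]; ring
  have hF_int : IntegrableOn F (Ioi 0) := by
    rw [hF_eq]; exact ((h3.sub (h1.const_mul _)).add (h0.const_mul _)).const_mul _
  have hF_integral :
      ∫ t in Ioi 0, F t = ε * (a * b * (a + b)) * ∫ t in Ioi 0, t ^ p * D t := by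
    rw [hF_eq, integral_const_mul, integral_add, integral_sub, integral_const_mul,
      integral_const_mul, hm1, hm3]
    · ring
    exacts [h3, h1.const_mul _, h3.sub (h1.const_mul _), h0.const_mul _]
  have hF_nonpos : ∀ t ∈ Ioi (0 : ℝ), F t ≤ 0 := fun t ht =>
    mul_nonpos_of_nonneg_of_nonpos (pow_nonneg (le_of_lt ht) _) (hsign t ht)
  have hF_le : ∫ t in Ioi 0, F t ≤ 0 := setIntegral_nonpos measurableSet_Ioi hF_nonpos
  rcases hκ.lt_or_eq with hκ | hκ
  · rw [hF_integral] at hF_le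
    exact nonpos_of_mul_nonpos_right hF_le hκ
  -- With no constant term, `F ≤ 0` has zero integral, so `F = 0` a.e. and hence `D = 0` a.e.
  rw [← hκ, zero_mul] at hF_integral
  have hF_ae : -F =ᵐ[volume.restrict (Ioi 0)] 0 := by
    refine (integral_eq_zero_iff_of_nonneg_ae ?_ hF_int.neg).1 ?_
    · filter_upwards [ae_restrict_mem measurableSet_Ioi] with t ht
      exact neg_nonneg.2 (hF_nonpos t ht)
    · simp only [Pi.neg_apply]
      rw [integral_neg, hF_integral, neg_zero]
  have hroots : ∀ᵐ t ∂volume.restrict (Ioi (0 : ℝ)), t ∉ ({a, b, -(a + b)} : Set ℝ) :=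
    ae_restrict_of_ae (measure_eq_zero_iff_ae_notMem.1 ((Set.toFinite _).measure_zero _))
  have hzero : ∀ᵐ t ∂volume.restrict (Ioi (0 : ℝ)), t ^ p * D t = 0 := by
    filter_upwards [hF_ae, hroots] with t hFt ht
    simp only [mem_insert_iff, mem_singleton_iff, not_or] at ht
    have hcubic : ε * ((t - a) * (t - b) * (t + a + b)) ≠ 0 := by
      refine mul_ne_zero hε (mul_ne_zero (mul_ne_zero ?_ ?_) ?_) <;> intro h <;> grind
    have : F t = 0 := by simpa using hFt
    simp only [F] at this
    grind
  rw [integral_congr_ae hzero, integral_zero]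

lemma setIntegral_pow_mul_nonpos_of_sign_Ioo {a b : ℝ} (ha : 0 ≤ a) (hab : a ≤ b)
    (hin : ∀ t ∈ Ioo a b, 0 ≤ D t) (hout : ∀ t > 0, t ∉ Icc a b → D t ≤ 0)
    (h0 : IntegrableOn (fun t => t ^ p * D t) (Ioi 0))
    (h1 : IntegrableOn (fun t => t ^ (p + 1) * D t) (Ioi 0))
    (h3 : IntegrableOn (fun t => t ^ (p + 3) * D t) (Ioi 0))
    (hm1 : ∫ t in Ioi 0, t ^ (p + 1) * D t = 0) (hm3 : ∫ t in Ioi 0, t ^ (p + 3) * D t = 0) :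
    ∫ t in Ioi 0, t ^ p * D t ≤ 0 := by
  have hb : 0 ≤ b := ha.trans hab
  refine setIntegral_pow_mul_nonpos_of_cubic (a := a) (b := b) one_ne_zero
    (by rw [one_mul]; positivity)
    h0 h1 h3 hm1 hm3 fun t ht => ?_
  rw [one_mul]
  by_cases hmem : t ∈ Icc a b
  · rcases hmem.1.eq_or_lt with rfl | hat
    · simp
    rcases hmem.2.eq_or_lt with rfl | htb
    · simp
    exact mul_nonpos_of_nonpos_of_nonneg (mul_nonpos_of_nonpos_of_nonneg
      (mul_nonpos_of_nonneg_of_nonpos (by linarith) (by linarith)) (by linarith))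
      (hin t ⟨hat, htb⟩)
  · refine mul_nonpos_of_nonneg_of_nonpos (mul_nonneg ?_ (by linarith)) (hout t ht hmem)
    rcases (not_and_or.1 hmem).imp not_le.1 not_le.1 with h | h
    · exact mul_nonneg_of_nonpos_of_nonpos (by linarith) (by linarith)
    · exact mul_nonneg (by linarith) (by linarith)

lemma setIntegral_pow_mul_nonpos_of_sign_Ioi {a : ℝ} (ha : 0 ≤ a)
    (hin : ∀ t > a, 0 ≤ D t) (hout : ∀ t ∈ Ioo 0 a, D t ≤ 0)
    (h0 : IntegrableOn (fun t => t ^ p * D t) (Ioi 0))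
    (h1 : IntegrableOn (fun t => t ^ (p + 1) * D t) (Ioi 0))
    (h3 : IntegrableOn (fun t => t ^ (p + 3) * D t) (Ioi 0))
    (hm1 : ∫ t in Ioi 0, t ^ (p + 1) * D t = 0) (hm3 : ∫ t in Ioi 0, t ^ (p + 3) * D t = 0) :
    ∫ t in Ioi 0, t ^ p * D t ≤ 0 := by
  refine setIntegral_pow_mul_nonpos_of_cubic (a := 0) (b := a) (ε := -1) (by norm_num) (by simp)
    h0 h1 h3 hm1 hm3 fun t ht => ?_
  simp only [sub_zero, add_zero, neg_mul, one_mul]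
  rcases lt_trichotomy t a with h | rfl | h
  · exact neg_nonpos.2 (mul_nonneg_of_nonpos_of_nonpos (mul_nonpos_of_nonpos_of_nonneg
      (mul_nonpos_of_nonneg_of_nonpos (by linarith) (by linarith)) (by linarith))
      (hout t ⟨ht, h⟩))
  · simp
  · exact neg_nonpos.2 (mul_nonneg (mul_nonneg (mul_nonneg (by linarith) (by linarith))
      (by linarith)) (hin t h))

lemma setIntegral_pow_mul_nonpos_of_ordConnected (hD : (Ioi 0 ∩ {t | 0 ≤ D t}).OrdConnected)
    (h0 : IntegrableOn (fun t => t ^ p * D t) (Ioi 0))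
    (h1 : IntegrableOn (fun t => t ^ (p + 1) * D t) (Ioi 0))
    (h3 : IntegrableOn (fun t => t ^ (p + 3) * D t) (Ioi 0))
    (hm1 : ∫ t in Ioi 0, t ^ (p + 1) * D t = 0) (hm3 : ∫ t in Ioi 0, t ^ (p + 3) * D t = 0) :
    ∫ t in Ioi 0, t ^ p * D t ≤ 0 := by
  set K := Ioi 0 ∩ {t | 0 ≤ D t}
  have hnot : ∀ t > 0, t ∉ K → D t ≤ 0 := fun t ht htK =>
    le_of_lt (not_le.1 fun h => htK ⟨ht, h⟩)
  rcases K.eq_empty_or_nonempty with hK | hK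
  · exact setIntegral_pow_mul_nonpos_of_sign_Ioo le_rfl le_rfl (by simp)
      (fun t ht _ => hnot t ht (by simp [hK])) h0 h1 h3 hm1 hm3
  have hK_bdd : BddBelow K := ⟨0, fun t ht => le_of_lt ht.1⟩
  have ha : 0 ≤ sInf K := le_csInf hK fun t ht => le_of_lt ht.1
  have hmem : ∀ {s u t}, s ∈ K → u ∈ K → s < t → t < u → 0 ≤ D t :=
    fun hs hu hst htu => (hD.out hs hu ⟨le_of_lt hst, le_of_lt htu⟩).2
  by_cases hK_bdd' : BddAbove K
  · refine setIntegral_pow_mul_nonpos_of_sign_Ioo ha (csInf_le_csSup hK hK_bdd hK_bdd')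
      (fun t ht => ?_) (fun t ht htK => hnot t ht fun h => htK ⟨csInf_le hK_bdd h,
        le_csSup hK_bdd' h⟩) h0 h1 h3 hm1 hm3
    obtain ⟨s, hs, hst⟩ := exists_lt_of_csInf_lt hK ht.1
    obtain ⟨u, hu, htu⟩ := exists_lt_of_lt_csSup hK ht.2
    exact hmem hs hu hst htu
  · refine setIntegral_pow_mul_nonpos_of_sign_Ioi ha (fun t ht => ?_)
      (fun t ht => hnot t ht.1 fun h => (csInf_le hK_bdd h).not_gt ht.2) h0 h1 h3 hm1 hm3
    obtain ⟨s, hs, hst⟩ := exists_lt_of_csInf_lt hK ht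
    obtain ⟨u, hu, htu⟩ := not_bddAbove_iff.1 hK_bdd' t
    exact hmem hs hu hst htu

end Moments

lemma integral_pow_mul_sub_exp_neg_mul {w : ℝ → ℝ} (k : ℕ) {l : ℝ} (hl : 0 < l) (C : ℝ)
    (hk : IntegrableOn (fun t => t ^ k * w t) (Ioi 0)) :
    IntegrableOn (fun t => t ^ k * (w t - C * exp (-(l * t)))) (Ioi 0) ∧
      ∫ t in Ioi 0, t ^ k * (w t - C * exp (-(l * t))) =
        (∫ t in Ioi 0, t ^ k * w t) - C * (k ! / l ^ (k + 1)) := by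
  have hv := (integrableOn_pow_mul_exp_neg_mul_Ioi k hl).const_mul C
  have heq : (fun t => t ^ k * (w t - C * exp (-(l * t)))) =
      fun t => t ^ k * w t - C * (t ^ k * exp (-(l * t))) := by
    funext t; ring
  rw [heq, integral_sub hk hv, integral_const_mul, integral_pow_mul_exp_neg_mul_Ioi k hl]
  exact ⟨hk.sub hv, rfl⟩

/-- `e^{-g} ≥ C e^{-l t}` exactly where `C ≤ e^{l t - g t}`, and `l t - g t` is concave. -/
lemma ordConnected_exp_neg_sub_nonneg {g : ℝ → ℝ} (hg : ConvexOn ℝ (Ioi 0) g) (l C : ℝ) :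
    (Ioi 0 ∩ {t | 0 ≤ exp (-g t) - C * exp (-(l * t))}).OrdConnected := by
  have hsign : Ioi 0 ∩ {t | 0 ≤ exp (-g t) - C * exp (-(l * t))} =
      {t ∈ Ioi 0 | C ≤ exp (l * t - g t)} := by
    ext t
    refine and_congr_right fun _ => ?_
    rw [show l * t - g t = -g t - -(l * t) by ring, exp_sub, le_div_iff₀ (exp_pos _)]
    exact sub_nonneg (a := exp (-g t))
  rw [hsign]
  exact ((((LinearMap.mul ℝ ℝ l).concaveOn (convex_Ioi 0)).sub hg).quasiconcaveOn.monotone_comp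
    exp_monotone C).ordConnected

/-- Compare `e^{-g}` with the exponential density `C e^{-l t}` having the same moments `p + 1` and
`p + 3`; their difference is nonnegative on an interval. -/
theorem integral_pow_mul_exp_neg_le_of_convexOn {p : ℕ} {g : ℝ → ℝ} {l : ℝ} (hl : 0 < l)
    (hg : ConvexOn ℝ (Ioi 0) g)
    (h0 : IntegrableOn (fun t => t ^ p * exp (-g t)) (Ioi 0))
    (h1 : IntegrableOn (fun t => t ^ (p + 1) * exp (-g t)) (Ioi 0))
    (h3 : IntegrableOn (fun t => t ^ (p + 3) * exp (-g t)) (Ioi 0))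
    (hmoments : ((p : ℝ) + 2) * (p + 3) * ∫ t in Ioi 0, t ^ (p + 1) * exp (-g t) =
      l ^ 2 * ∫ t in Ioi 0, t ^ (p + 3) * exp (-g t)) :
    ((p : ℝ) + 1) * ∫ t in Ioi 0, t ^ p * exp (-g t) ≤
      l * ∫ t in Ioi 0, t ^ (p + 1) * exp (-g t) := by
  set Q := ∫ t in Ioi 0, t ^ (p + 1) * exp (-g t)
  set C := Q * l ^ (p + 2) / (p + 1)!
  obtain ⟨i0, e0⟩ := integral_pow_mul_sub_exp_neg_mul p hl C h0
  obtain ⟨i1, e1⟩ := integral_pow_mul_sub_exp_neg_mul (p + 1) hl C h1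
  obtain ⟨i3, e3⟩ := integral_pow_mul_sub_exp_neg_mul (p + 3) hl C h3
  have hl0 : l ≠ 0 := hl.ne'
  have hm1 : ∫ t in Ioi 0, t ^ (p + 1) * (exp (-g t) - C * exp (-(l * t))) = 0 := by
    rw [e1]
    change Q - _ = 0
    rw [sub_eq_zero]
    simp only [C]
    field_simp
  have hm3 : ∫ t in Ioi 0, t ^ (p + 3) * (exp (-g t) - C * exp (-(l * t))) = 0 := by
    rw [e3, sub_eq_zero, ← mul_left_inj' (pow_ne_zero 2 hl0), mul_comm _ (l ^ 2), ← hmoments]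
    simp only [C]
    push_cast [Nat.factorial_succ]
    field_simp
    ring
  have hC0 : (p + 1) * (C * (p ! / l ^ (p + 1))) = l * Q := by
    simp only [C]
    push_cast [Nat.factorial_succ]
    field_simp
    ring
  have := setIntegral_pow_mul_nonpos_of_ordConnected (ordConnected_exp_neg_sub_nonneg hg l C)
    i0 i1 i3 hm1 hm3
  rw [e0, sub_nonpos] at this
  calc ((p : ℝ) + 1) * ∫ t in Ioi 0, t ^ p * exp (-g t)
      ≤ (p + 1) * (C * (p ! / l ^ (p + 1))) := by gcongr
    _ = l * Q := hC0

section IntegrationByParts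

variable {m : ℕ} {w w' : ℝ → ℝ}

/-- Integration by parts; the boundary term `R ^ (m + 1) w R` is nonnegative. -/
lemma intervalIntegral_pow_mul_neg_deriv_le {R : ℝ} (hR : 0 < R)
    (hw : ContinuousOn w (Ici 0)) (hw' : ContinuousOn w' (Ici 0))
    (hderiv : ∀ t > 0, HasDerivAt w (w' t) t) (hw_nonneg : ∀ t > 0, 0 ≤ w t)
    (hint : IntegrableOn (fun t => t ^ m * w t) (Ioi 0)) :
    ∫ t in (0)..R, t ^ (m + 1) * -w' t ≤ (m + 1) * ∫ t in Ioi 0, t ^ m * w t := by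
  have hIcc : Icc 0 R ⊆ Ici 0 := Icc_subset_Ici_self
  have hcont : ∀ k, ContinuousOn (fun t : ℝ => t ^ k * w t) (Icc 0 R) := fun k =>
    (continuous_pow k).continuousOn.mul (hw.mono hIcc)
  have hcont' : ContinuousOn (fun t : ℝ => t ^ (m + 1) * -w' t) (Icc 0 R) :=
    (continuous_pow _).continuousOn.mul (hw'.mono hIcc).neg
  have hftc : ∫ t in (0)..R, ((m + 1) * (t ^ m * w t) - t ^ (m + 1) * -w' t) =
      R ^ (m + 1) * w R - 0 ^ (m + 1) * w 0 := by
    refine intervalIntegral.integral_eq_sub_of_hasDerivAt_of_le hR.le (hcont _) (fun t ht => ?_) ?_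
    · refine ((hasDerivAt_pow (m + 1) t).mul (hderiv t ht.1)).congr_deriv ?_
      rw [Nat.add_sub_cancel, Nat.cast_succ]
      ring
    · exact (((hcont m).const_mul _).sub hcont').intervalIntegrable_of_Icc hR.le
  rw [intervalIntegral.integral_sub (((hcont m).intervalIntegrable_of_Icc hR.le).const_mul _)
    (hcont'.intervalIntegrable_of_Icc hR.le), intervalIntegral.integral_const_mul,
    zero_pow (Nat.succ_ne_zero m), zero_mul, sub_zero] at hftc
  have hpartial : ∫ t in (0)..R, t ^ m * w t ≤ ∫ t in Ioi 0, t ^ m * w t := by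
    rw [intervalIntegral.integral_of_le hR.le]
    exact setIntegral_mono_set hint
      ((ae_restrict_iff' measurableSet_Ioi).2 (ae_of_all _ fun t ht =>
        mul_nonneg (pow_nonneg (le_of_lt ht) _) (hw_nonneg t ht)))
      Ioc_subset_Ioi_self.eventuallyLE
  have := mul_nonneg (pow_nonneg hR.le (m + 1)) (hw_nonneg R hR)
  have := mul_le_mul_of_nonneg_left hpartial (by positivity : (0 : ℝ) ≤ m + 1)
  linarith

lemma integrableOn_pow_mul_neg_deriv (hw : ContinuousOn w (Ici 0))
    (hw' : ContinuousOn w' (Ici 0)) (hderiv : ∀ t > 0, HasDerivAt w (w' t) t)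
    (hw_nonneg : ∀ t > 0, 0 ≤ w t) (hw'_nonpos : ∀ t > 0, w' t ≤ 0)
    (hint : IntegrableOn (fun t => t ^ m * w t) (Ioi 0)) :
    IntegrableOn (fun t => t ^ (m + 1) * -w' t) (Ioi 0) := by
  refine integrableOn_Ioi_of_intervalIntegral_norm_bounded ((m + 1) * ∫ t in Ioi 0, t ^ m * w t)
    0 (fun R => (((continuous_pow _).continuousOn.mul (hw'.mono Icc_subset_Ici_self).neg
      ).integrableOn_Icc).mono_set Ioc_subset_Icc_self) tendsto_id
    ((eventually_gt_atTop 0).mono fun R hR => ?_)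
  refine le_of_eq_of_le (intervalIntegral.integral_congr fun t ht => ?_)
    (intervalIntegral_pow_mul_neg_deriv_le hR hw hw' hderiv hw_nonneg hint)
  rw [id, uIcc_of_le hR.le] at ht
  rcases ht.1.eq_or_lt with rfl | ht0
  · simp
  · exact Real.norm_of_nonneg (mul_nonneg (pow_nonneg ht0.le _) (neg_nonneg.2 (hw'_nonpos t ht0)))

lemma integral_pow_mul_neg_deriv_le (hw : ContinuousOn w (Ici 0))
    (hw' : ContinuousOn w' (Ici 0)) (hderiv : ∀ t > 0, HasDerivAt w (w' t) t)
    (hw_nonneg : ∀ t > 0, 0 ≤ w t) (hw'_nonpos : ∀ t > 0, w' t ≤ 0)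
    (hint : IntegrableOn (fun t => t ^ m * w t) (Ioi 0)) :
    ∫ t in Ioi 0, t ^ (m + 1) * -w' t ≤ (m + 1) * ∫ t in Ioi 0, t ^ m * w t :=
  le_of_tendsto (intervalIntegral_tendsto_integral_Ioi 0
      (integrableOn_pow_mul_neg_deriv hw hw' hderiv hw_nonneg hw'_nonpos hint) tendsto_id)
    ((eventually_gt_atTop 0).mono fun _ hR =>
      intervalIntegral_pow_mul_neg_deriv_le hR hw hw' hderiv hw_nonneg hint)

end IntegrationByParts

lemma integrableOn_Ioi_pow_mul_of_le {j k : ℕ} {w : ℝ → ℝ} (hjk : j ≤ k)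
    (hw : ContinuousOn w (Ici 0)) (hk : IntegrableOn (fun t => t ^ k * w t) (Ioi 0)) :
    IntegrableOn (fun t => t ^ j * w t) (Ioi 0) := by
  have hcont : ContinuousOn (fun t => t ^ j * w t) (Ici 0) := (continuous_pow j).continuousOn.mul hw
  have hnear : IntegrableOn (fun t => t ^ j * w t) (Ioc 0 1) :=
    (hcont.mono Icc_subset_Ici_self).integrableOn_Icc.mono_set Ioc_subset_Icc_self
  have hfar : IntegrableOn (fun t => t ^ j * w t) (Ioi 1) := by
    refine Integrable.mono (hk.mono_set (Ioi_subset_Ioi zero_le_one)) ?_ ?_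
    · exact (hcont.mono fun t (ht : 1 < t) => zero_le_one.trans ht.le).aestronglyMeasurable
        measurableSet_Ioi
    · refine (ae_restrict_iff' measurableSet_Ioi).2 (ae_of_all _ fun t (ht : 1 < t) => ?_)
      rw [norm_mul, norm_mul, norm_pow, norm_pow, Real.norm_of_nonneg (zero_le_one.trans ht.le)]
      gcongr
      exact ht.le
  rw [← Ioc_union_Ioi_eq_Ioi zero_le_one]
  exact hnear.union hfar

theorem integral_pow_mul_exp_neg_mul_deriv_le_of_convexOn {m : ℕ} {g : ℝ → ℝ}
    (hg : ContDiffOn ℝ 1 g (Ici 0)) (hconv : ConvexOn ℝ (Ici 0) g)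
    (hmono : MonotoneOn g (Ici 0))
    (h1 : IntegrableOn (fun t => t ^ (m + 1) * exp (-g t)) (Ioi 0))
    (h3 : IntegrableOn (fun t => t ^ (m + 3) * exp (-g t)) (Ioi 0))
    (hmoment : ∫ t in Ioi 0, t ^ (m + 3) * exp (-g t) =
      (m + 2) * ∫ t in Ioi 0, t ^ (m + 1) * exp (-g t)) :
    ∫ t in Ioi 0, t ^ (m + 1) * (exp (-g t) * deriv g t) ≤
      √(m + 3) * ∫ t in Ioi 0, t ^ (m + 1) * exp (-g t) := by
  have hw : ContinuousOn (fun t => exp (-g t)) (Ici 0) := hg.continuousOn.neg.rexp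
  have h0 := integrableOn_Ioi_pow_mul_of_le (by omega : m ≤ m + 3) hw h3
  -- `deriv g 0` may be junk; the one-sided derivative is continuous on `[0, ∞)`.
  set g' := derivWithin g (Ici 0)
  have hderiv : ∀ t > 0, HasDerivAt g (g' t) t := fun t ht =>
    ((hg.differentiableOn one_ne_zero t (le_of_lt ht)).hasDerivWithinAt).hasDerivAt
      (Ici_mem_nhds ht)
  have heq : ∫ t in Ioi 0, t ^ (m + 1) * (exp (-g t) * deriv g t) =
      ∫ t in Ioi 0, t ^ (m + 1) * -(exp (-g t) * -g' t) :=
    setIntegral_congr_fun measurableSet_Ioi fun t ht => by rw [(hderiv t ht).deriv]; ring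
  rw [heq]
  calc _ ≤ (m + 1) * ∫ t in Ioi 0, t ^ m * exp (-g t) :=
        integral_pow_mul_neg_deriv_le hw
          (hw.mul (hg.continuousOn_derivWithin (uniqueDiffOn_Ici 0) le_rfl).neg)
          (fun t ht => (hderiv t ht).neg.exp) (fun t _ => (exp_pos _).le)
          (fun t _ => mul_nonpos_of_nonneg_of_nonpos (exp_pos _).le
            (neg_nonpos.2 hmono.derivWithin_nonneg)) h0
    _ ≤ _ := by
        refine integral_pow_mul_exp_neg_le_of_convexOn (by positivity)
          (hconv.subset Ioi_subset_Ici_self (convex_Ioi 0)) h0 h1 h3 ?_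
        rw [sq_sqrt (by positivity), hmoment]
        ring

section RadialConvexity

variable {E : Type*} [NormedAddCommGroup E] [NormedSpace ℝ E] [Nontrivial E] {g : ℝ → ℝ}

lemma convexOn_comp_abs_of_convexOn_comp_norm (h : ConvexOn ℝ univ fun x : E => g ‖x‖) :
    ConvexOn ℝ univ fun r : ℝ => g |r| := by
  obtain ⟨u, hu⟩ := exists_norm_eq E zero_le_one
  refine (h.comp_linearMap (LinearMap.toSpanSingleton ℝ E u)).congr fun r _ => ?_
  simp [norm_smul, hu]

lemma convexOn_Ici_of_convexOn_comp_norm (h : ConvexOn ℝ univ fun x : E => g ‖x‖) :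
    ConvexOn ℝ (Ici 0) g :=
  ((convexOn_comp_abs_of_convexOn_comp_norm h).subset (subset_univ _) (convex_Ici 0)).congr
    fun r (hr : 0 ≤ r) => by simp only [abs_of_nonneg hr]

lemma monotoneOn_Ici_of_convexOn_comp_norm (h : ConvexOn ℝ univ fun x : E => g ‖x‖) :
    MonotoneOn g (Ici 0) := by
  intro s (hs : 0 ≤ s) t (ht : 0 ≤ t) hst
  have := (convexOn_comp_abs_of_convexOn_comp_norm h).le_on_segment (mem_univ (-t)) (mem_univ t)
    (z := s) (by rw [segment_eq_Icc (by linarith)]; exact ⟨by linarith, hst⟩)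
  simpa [abs_of_nonneg hs, abs_of_nonneg ht] using this

end RadialConvexity

section EuclideanSpace

variable {n : ℕ}

/-- The area `n |Bⁿ|` of the unit sphere `Sⁿ⁻¹` of `ℝⁿ`. -/
noncomputable def sphereArea (n : ℕ) : ℝ :=
  n * volume.real (ball (0 : EuclideanSpace ℝ (Fin n)) 1)

lemma sphereArea_nonneg (n : ℕ) : 0 ≤ sphereArea n := by
  unfold sphereArea; positivity

lemma integral_comp_norm_euclideanSpace [NeZero n] (h : ℝ → ℝ) :
    ∫ x : EuclideanSpace ℝ (Fin n), h ‖x‖ =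
      sphereArea n * ∫ r in Ioi 0, r ^ (n - 1) * h r := by
  rw [integral_fun_norm_addHaar, finrank_euclideanSpace_fin, sphereArea]
  simp only [nsmul_eq_mul, smul_eq_mul, mul_assoc]

lemma integral_densityMeasure {f : EuclideanSpace ℝ (Fin n) → ℝ} (hf : AEMeasurable f)
    (hf_nonneg : ∀ᵐ x, 0 ≤ f x) (h : EuclideanSpace ℝ (Fin n) → ℝ) :
    ∫ x, h x ∂densityMeasure f = ∫ x, f x * h x := by
  rw [densityMeasure, integral_withDensity_eq_integral_toReal_smul₀ hf.ennreal_ofReal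
    (ae_of_all _ fun _ => ENNReal.ofReal_lt_top)]
  refine integral_congr_ae (hf_nonneg.mono fun x hx => ?_)
  simp [ENNReal.toReal_ofReal hx]

lemma IsIsotropicFn.integral_norm_sq_mul {f : EuclideanSpace ℝ (Fin n) → ℝ}
    (hf : IsIsotropicFn f) : ∫ x, ‖x‖ ^ 2 * f x = n := by
  have hcoord : ∀ i, ∫ x : EuclideanSpace ℝ (Fin n), x i ^ 2 * f x = 1 := fun i => by
    simpa [EuclideanSpace.inner_single_right] using hf.2 (EuclideanSpace.single i 1)
  have hsum : (fun x : EuclideanSpace ℝ (Fin n) => ‖x‖ ^ 2 * f x) =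
      fun x => ∑ i, x i ^ 2 * f x := by
    funext x
    rw [EuclideanSpace.norm_sq_eq, Finset.sum_mul]
    simp
  rw [hsum, integral_finsetSum _ fun i _ => .of_integral_ne_zero (by simp [hcoord i])]
  simp [hcoord]

section Radial

variable [NeZero n] {w : ℝ → ℝ}

lemma integral_densityMeasure_comp_norm
    (hw : AEMeasurable fun x : EuclideanSpace ℝ (Fin n) => w ‖x‖)
    (hw_nonneg : ∀ r, 0 ≤ w r)
    (h : ℝ → ℝ) :
    ∫ x, h ‖x‖ ∂densityMeasure (fun x : EuclideanSpace ℝ (Fin n) => w ‖x‖) =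
      sphereArea n * ∫ r in Ioi 0, r ^ (n - 1) * (w r * h r) := by
  rw [integral_densityMeasure hw (ae_of_all _ fun _ => hw_nonneg _)]
  exact integral_comp_norm_euclideanSpace fun r => w r * h r

lemma sphereArea_mul_integral_eq_one
    (hw : AEMeasurable fun x : EuclideanSpace ℝ (Fin n) => w ‖x‖)
    (hw_nonneg : ∀ r, 0 ≤ w r)
    (hprob :
      IsProbabilityMeasure (densityMeasure fun x : EuclideanSpace ℝ (Fin n) => w ‖x‖)) :
    sphereArea n * ∫ r in Ioi 0, r ^ (n - 1) * w r = 1 := by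
  simpa using (integral_densityMeasure_comp_norm hw hw_nonneg fun _ => 1).symm

lemma IsIsotropicFn.sphereArea_mul_integral_pow_eq
    (hiso : IsIsotropicFn fun x : EuclideanSpace ℝ (Fin n) => w ‖x‖) :
    sphereArea n * ∫ r in Ioi 0, r ^ (n + 1) * w r = n := by
  rw [← hiso.integral_norm_sq_mul, integral_comp_norm_euclideanSpace fun r => r ^ 2 * w r]
  congr 1
  refine setIntegral_congr_fun measurableSet_Ioi fun r _ => ?_
  rw [← mul_assoc, ← pow_add, show n - 1 + 2 = n + 1 by have := NeZero.ne n; omega]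

end Radial

end EuclideanSpace

/-- For a radial isotropic log-concave probability measure on `ℝⁿ`, `n ≥ 2`, with density
`f(x) = e^{−g(|x|)}`, one has `∫ g'(|x|) dμ ≤ √(n+1)`. -/
theorem radial_gradient_bound {n : ℕ} (hn : 2 ≤ n)
    (g : ℝ → ℝ) (hg : ContDiffOn ℝ 1 g (Set.Ici 0))
    (hconv : ConvexOn ℝ Set.univ (fun x : EuclideanSpace ℝ (Fin n) => g ‖x‖))
    (hiso : IsIsotropicFn (fun x : EuclideanSpace ℝ (Fin n) => Real.exp (-g ‖x‖)))
    (hprob : IsProbabilityMeasure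
      (densityMeasure (fun x : EuclideanSpace ℝ (Fin n) => Real.exp (-g ‖x‖)))) :
    (∫ x, deriv g ‖x‖
        ∂(densityMeasure (fun x : EuclideanSpace ℝ (Fin n) => Real.exp (-g ‖x‖)))) ≤
      Real.sqrt (n + 1) := by
  obtain ⟨m, rfl⟩ : ∃ m, n = m + 2 := ⟨n - 2, by omega⟩
  set Q := ∫ t in Ioi 0, t ^ (m + 1) * exp (-g t)
  set R := ∫ t in Ioi 0, t ^ (m + 3) * exp (-g t)
  have hw : AEMeasurable fun x : EuclideanSpace ℝ (Fin (m + 2)) => exp (-g ‖x‖) :=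
    (hg.continuousOn.comp_continuous continuous_norm fun x => norm_nonneg x).neg.rexp.aemeasurable
  have hw_nonneg : ∀ r, 0 ≤ exp (-g r) := fun r => (exp_pos _).le
  have hQ : sphereArea (m + 2) * Q = 1 := sphereArea_mul_integral_eq_one hw hw_nonneg hprob
  have hR : sphereArea (m + 2) * R = m + 2 := by
    exact_mod_cast hiso.sphereArea_mul_integral_pow_eq (w := fun r => exp (-g r))
  have hQ0 : Q ≠ 0 := right_ne_zero_of_mul_eq_one hQ
  have hRQ : R = (m + 2) * Q := mul_left_cancel₀ (left_ne_zero_of_mul_eq_one hQ)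
    (by rw [hR, mul_left_comm, hQ, mul_one])
  have hR0 : R ≠ 0 := by rw [hRQ]; exact mul_ne_zero (by positivity) hQ0
  calc ∫ x, deriv g ‖x‖ ∂densityMeasure (fun x => exp (-g ‖x‖))
      = sphereArea (m + 2) * ∫ t in Ioi 0, t ^ (m + 1) * (exp (-g t) * deriv g t) :=
        integral_densityMeasure_comp_norm hw hw_nonneg _
    _ ≤ sphereArea (m + 2) * (√(m + 3) * Q) :=
        mul_le_mul_of_nonneg_left (integral_pow_mul_exp_neg_mul_deriv_le_of_convexOn hg
          (convexOn_Ici_of_convexOn_comp_norm hconv) (monotoneOn_Ici_of_convexOn_comp_norm hconv)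
          (.of_integral_ne_zero hQ0) (.of_integral_ne_zero hR0) hRQ) (sphereArea_nonneg _)
    _ = √(↑(m + 2) + 1) := by rw [mul_left_comm, hQ, mul_one]; push_cast; ring_nf
end

section
/- Let f : ℝⁿ → [0,∞) be a log-concave function and let a, r > 0. Then for Lebesgue-almost every z ∈ ℝⁿ, f is differentiable at z and lim_{t→0⁺} ( sup_{y ∈ B₂ⁿ} f(z − r t y)·aᵗ − f(z) ) / t = r·|∇f(z)| + f(z)·ln a. (The left-hand side is the first variation (f ⋆ t·(a·1_{rB₂ⁿ}))(z) − f(z) divided by t, where ⋆ is the Asplund product and t·g the functional dilation (t·g)(x) = g(x/t)ᵗ.) -/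
open MeasureTheory Filter Set Metric
open scoped Pointwise ENNReal NNReal Topology RealInnerProductSpace

lemma tendsto_rpow_sub_one_div {a : ℝ} (ha : 0 < a) :
    Tendsto (fun t : ℝ => (a ^ t - 1) / t) (nhdsWithin 0 (Set.Ioi 0)) (nhds (Real.log a)) := by
  have h : HasDerivAt (fun t : ℝ => a ^ t) (a ^ (0:ℝ) * Real.log a) 0 :=
    (Real.hasStrictDerivAt_const_rpow ha 0).hasDerivAt
  rw [Real.rpow_zero, one_mul] at h
  have h2 : Tendsto (slope (fun t : ℝ => a ^ t) 0) (nhdsWithin 0 (Set.Ioi 0))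
      (nhds (Real.log a)) :=
    (hasDerivAt_iff_tendsto_slope.1 h).mono_left
      (nhdsWithin_mono _ fun x hx => ne_of_gt hx)
  refine h2.congr fun t => ?_
  simp [slope_def_field, Real.rpow_zero, div_eq_inv_mul]

lemma tendsto_rpow_self {a : ℝ} (ha : 0 < a) :
    Tendsto (fun t : ℝ => a ^ t) (nhdsWithin 0 (Set.Ioi 0)) (nhds 1) := by
  have := (Real.continuousAt_const_rpow (b := (0:ℝ)) ha.ne').tendsto
  rw [Real.rpow_zero] at this
  exact this.mono_left nhdsWithin_le_nhds

lemma limit_at_diff_pt {n : ℕ} (f : EuclideanSpace ℝ (Fin n) → ℝ)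
    {z : EuclideanSpace ℝ (Fin n)} (hd : DifferentiableAt ℝ f z)
    {a r : ℝ} (ha : 0 < a) (hr : 0 < r) :
    Filter.Tendsto
      (fun t : ℝ =>
        (sSup ((fun y => f (z - (r * t) • y) * a ^ t) ''
            Metric.closedBall (0 : EuclideanSpace ℝ (Fin n)) 1) - f z) / t)
      (nhdsWithin 0 (Set.Ioi 0))
      (nhds (r * ‖fderiv ℝ f z‖ + f z * Real.log a)) := by
  set L := fderiv ℝ f z with hL
  set M := ‖L‖ with hM
  have hM0 : 0 ≤ M := norm_nonneg _
  set T := r * M + f z * Real.log a with hT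
  rw [Metric.tendsto_nhds]
  intro η hη
  set ε := η / (4 * r) with hεdef
  have hε : 0 < ε := div_pos hη (by positivity)
  have hrε : r * ε = η / 4 := by
    rw [hεdef]; field_simp
  -- little-o bound
  have hlo : ∀ᶠ x in nhds z, ‖f x - f z - L (x - z)‖ ≤ ε * ‖x - z‖ :=
    hd.hasFDerivAt.isLittleO.def hε
  obtain ⟨δ, hδ, hball⟩ := Metric.eventually_nhds_iff.1 hlo
  -- auxiliary tendsto facts for the upper and lower envelopes
  have hub_t : Tendsto (fun t : ℝ => f z * ((a ^ t - 1) / t) + r * (M + ε) * a ^ t)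
      (nhdsWithin 0 (Set.Ioi 0)) (nhds (f z * Real.log a + r * (M + ε) * 1)) :=
    ((tendsto_const_nhds.mul (tendsto_rpow_sub_one_div ha)).add
      (tendsto_const_nhds.mul (tendsto_rpow_self ha)))
  have hlb_t : Tendsto (fun t : ℝ => f z * ((a ^ t - 1) / t) + r * (M - 2 * ε) * a ^ t)
      (nhdsWithin 0 (Set.Ioi 0)) (nhds (f z * Real.log a + r * (M - 2 * ε) * 1)) :=
    ((tendsto_const_nhds.mul (tendsto_rpow_sub_one_div ha)).add
      (tendsto_const_nhds.mul (tendsto_rpow_self ha)))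
  have hub_ev : ∀ᶠ t in nhdsWithin 0 (Set.Ioi 0),
      f z * ((a ^ t - 1) / t) + r * (M + ε) * a ^ t < T + η :=
    hub_t.eventually_lt_const (by rw [hT]; nlinarith)
  have hlb_ev : ∀ᶠ t in nhdsWithin 0 (Set.Ioi 0),
      T - η < f z * ((a ^ t - 1) / t) + r * (M - 2 * ε) * a ^ t :=
    hlb_t.eventually_const_lt (by rw [hT]; nlinarith)
  have hmem : Set.Ioo (0:ℝ) (δ / r) ∈ nhdsWithin (0:ℝ) (Set.Ioi 0) :=
    Ioo_mem_nhdsGT_of_mem ⟨le_refl _, div_pos hδ hr⟩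
  filter_upwards [hub_ev, hlb_ev, hmem] with t hubt hlbt htmem
  obtain ⟨ht0, htδ⟩ := htmem
  have hrt : 0 < r * t := mul_pos hr ht0
  have hrtδ : r * t < δ := by rw [mul_comm]; exact (lt_div_iff₀ hr).1 htδ
  have hat : (0:ℝ) < a ^ t := Real.rpow_pos_of_pos ha t
  set s : Set ℝ := (fun y => f (z - (r * t) • y) * a ^ t) ''
      Metric.closedBall (0 : EuclideanSpace ℝ (Fin n)) 1 with hs
  -- basic estimate at points of the small ball
  have hest : ∀ y : EuclideanSpace ℝ (Fin n), ‖y‖ ≤ 1 →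
      |f (z - (r * t) • y) - f z - L ((z - (r * t) • y) - z)| ≤ ε * (r * t) ∧
      ‖(z - (r * t) • y) - z‖ ≤ r * t := by
    intro y hy
    have hxz : ‖(z - (r * t) • y) - z‖ ≤ r * t := by
      have h1 : (z - (r * t) • y) - z = -((r * t) • y) := by abel
      rw [h1, norm_neg, norm_smul, Real.norm_eq_abs, abs_of_pos hrt]
      nlinarith
    have hdist : dist (z - (r * t) • y) z < δ := by
      rw [dist_eq_norm]; exact lt_of_le_of_lt hxz hrtδ
    have := hball hdist
    rw [Real.norm_eq_abs] at this
    refine ⟨this.trans ?_, hxz⟩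
    exact mul_le_mul_of_nonneg_left hxz hε.le
  -- upper bound for all elements of s
  have hkey1 : ∀ w ∈ s, w ≤ (f z + r * t * (M + ε)) * a ^ t := by
    rintro w ⟨y, hy, rfl⟩
    have hy1 : ‖y‖ ≤ 1 := mem_closedBall_zero_iff.1 hy
    obtain ⟨habs, hxz⟩ := hest y hy1
    have h3 : L ((z - (r * t) • y) - z) ≤ M * (r * t) := by
      calc L ((z - (r * t) • y) - z) ≤ |L ((z - (r * t) • y) - z)| := le_abs_self _
        _ = ‖L ((z - (r * t) • y) - z)‖ := (Real.norm_eq_abs _).symm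
        _ ≤ ‖L‖ * ‖(z - (r * t) • y) - z‖ := L.le_opNorm _
        _ ≤ M * (r * t) := by rw [← hM]; exact mul_le_mul_of_nonneg_left hxz hM0
    have h4 : f (z - (r * t) • y) ≤ f z + r * t * (M + ε) := by
      have h5 := (abs_le.1 habs).2
      have hexp : r * t * (M + ε) = M * (r * t) + ε * (r * t) := by ring
      linarith
    exact mul_le_mul_of_nonneg_right h4 hat.le
  have hne : s.Nonempty := ⟨_, ⟨0, mem_closedBall_self zero_le_one, rfl⟩⟩
  have hbdd : BddAbove s := ⟨_, hkey1⟩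
  -- lower bound for sSup s
  obtain ⟨u', hu'1, hu'2⟩ := L.exists_lt_apply_of_lt_opNorm (r := M - ε) (by rw [← hM]; linarith)
  have hu : ∃ u : EuclideanSpace ℝ (Fin n), ‖u‖ ≤ 1 ∧ M - ε < L u := by
    rcases le_or_gt 0 (L u') with h | h
    · exact ⟨u', hu'1.le, by rwa [Real.norm_eq_abs, abs_of_nonneg h] at hu'2⟩
    · refine ⟨-u', by rw [norm_neg]; exact hu'1.le, ?_⟩
      rw [map_neg]
      rwa [Real.norm_eq_abs, abs_of_neg h] at hu'2
  obtain ⟨u, hu1, hu2⟩ := hu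
  have hmemu : -u ∈ Metric.closedBall (0 : EuclideanSpace ℝ (Fin n)) 1 := by
    rw [mem_closedBall_zero_iff, norm_neg]; exact hu1
  have hkey2 : (f z + r * t * (M - 2 * ε)) * a ^ t ≤ sSup s := by
    refine le_trans ?_ (le_csSup hbdd ⟨-u, hmemu, rfl⟩)
    have hyu : ‖-u‖ ≤ 1 := by rw [norm_neg]; exact hu1
    obtain ⟨habs, hxz⟩ := hest (-u) hyu
    have hLval : L ((z - (r * t) • (-u)) - z) = (r * t) * L u := by
      have h1 : (z - (r * t) • (-u)) - z = (r * t) • u := by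
        rw [smul_neg]; abel
      rw [h1, ContinuousLinearMap.map_smul, smul_eq_mul]
    have h5 : f z + r * t * (M - 2 * ε) ≤ f (z - (r * t) • (-u)) := by
      have h6 := (abs_le.1 habs).1
      rw [hLval] at h6
      have h7 : r * t * (M - ε) ≤ r * t * L u := mul_le_mul_of_nonneg_left hu2.le hrt.le
      have hexp : r * t * (M - 2 * ε) = r * t * (M - ε) - ε * (r * t) := by ring
      linarith
    exact mul_le_mul_of_nonneg_right h5 hat.le
  have hSle : sSup s ≤ (f z + r * t * (M + ε)) * a ^ t := csSup_le hne hkey1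
  -- translate the bounds through the algebraic identity
  have hid : ∀ K : ℝ, ((f z + r * t * K) * a ^ t - f z) / t
      = f z * ((a ^ t - 1) / t) + r * K * a ^ t := by
    intro K; field_simp; ring
  have hup : (sSup s - f z) / t ≤ f z * ((a ^ t - 1) / t) + r * (M + ε) * a ^ t := by
    rw [← hid (M + ε)]
    gcongr
  have hdown : f z * ((a ^ t - 1) / t) + r * (M - 2 * ε) * a ^ t ≤ (sSup s - f z) / t := by
    rw [← hid (M - 2 * ε)]
    gcongr
  rw [Real.dist_eq, abs_sub_lt_iff]
  constructor <;> linarith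

lemma logconcave_ae_differentiableAt {n : ℕ} (f : EuclideanSpace ℝ (Fin n) → ℝ)
    (hf : IsLogConcaveFn f) :
    ∀ᵐ z ∂(volume : Measure (EuclideanSpace ℝ (Fin n))), DifferentiableAt ℝ f z := by
  obtain ⟨h0, hlc⟩ := hf
  set P : Set (EuclideanSpace ℝ (Fin n)) := {x | 0 < f x} with hPdef
  have hPconv : Convex ℝ P := by
    intro x hx y hy c b hc hb hcb
    have h1 := hlc x y c b hc hb hcb
    have hpos : 0 < f x ^ c * f y ^ b :=
      mul_pos (Real.rpow_pos_of_pos hx c) (Real.rpow_pos_of_pos hy b)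
    exact lt_of_lt_of_le hpos h1
  set g : EuclideanSpace ℝ (Fin n) → ℝ := fun x => Real.log (f x) with hgdef
  have hg : ConcaveOn ℝ P g := by
    refine ⟨hPconv, fun x hx y hy c b hc hb hcb => ?_⟩
    have h1 := hlc x y c b hc hb hcb
    have hfx : (0:ℝ) < f x := hx
    have hfy : (0:ℝ) < f y := hy
    have h2 : Real.log (f x ^ c * f y ^ b) ≤ Real.log (f (c • x + b • y)) :=
      Real.log_le_log (mul_pos (Real.rpow_pos_of_pos hfx c) (Real.rpow_pos_of_pos hfy b)) h1
    rw [Real.log_mul (Real.rpow_pos_of_pos hfx c).ne' (Real.rpow_pos_of_pos hfy b).ne',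
      Real.log_rpow hfx, Real.log_rpow hfy] at h2
    simpa [hgdef, smul_eq_mul] using h2
  have hgU : ConcaveOn ℝ (interior P) g := hg.subset interior_subset hPconv.interior
  have hLip : LocallyLipschitzOn (interior P) g := hgU.locallyLipschitzOn isOpen_interior
  have hV : ∀ x ∈ interior P, ∃ ρ : ℝ, 0 < ρ ∧
      ∃ K : NNReal, LipschitzOnWith K g (ball x ρ) := by
    intro x hx
    obtain ⟨K, t, ht, hK⟩ := hLip hx
    rw [isOpen_interior.nhdsWithin_eq hx] at ht
    obtain ⟨ρ, hρ, hsub⟩ := Metric.mem_nhds_iff.1 ht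
    exact ⟨ρ, hρ, K, hK.mono hsub⟩
  choose! ρ hρ K hK using hV
  obtain ⟨T, hTU, hTc, hcover⟩ := TopologicalSpace.countable_cover_nhdsWithin
    (f := fun x => ball x (ρ x)) (s := interior P)
    (fun x hx => nhdsWithin_le_nhds (ball_mem_nhds x (hρ x hx)))
  have hae : ∀ x ∈ T, ∀ᵐ z ∂(volume : Measure (EuclideanSpace ℝ (Fin n))),
      z ∈ ball x (ρ x) → DifferentiableWithinAt ℝ g (ball x (ρ x)) z := fun x hx =>
    (hK x (hTU hx)).ae_differentiableWithinAt_of_mem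
  have hae2 := (ae_ball_iff hTc).2 hae
  have hfr : (volume : Measure (EuclideanSpace ℝ (Fin n))) (frontier P) = 0 :=
    hPconv.addHaar_frontier _
  filter_upwards [hae2, compl_mem_ae_iff.2 hfr] with z hz1 hz2
  by_cases hzc : z ∈ closure P
  · have hzU : z ∈ interior P := by
      by_contra h
      exact hz2 ⟨hzc, h⟩
    obtain ⟨x, hxT, hzball⟩ := mem_iUnion₂.1 (hcover hzU)
    have hdg : DifferentiableAt ℝ g z :=
      (hz1 x hxT hzball).differentiableAt (isOpen_ball.mem_nhds hzball)
    have heq : (fun x => Real.exp (g x)) =ᶠ[nhds z] f := by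
      filter_upwards [isOpen_interior.mem_nhds hzU] with w hw
      have hwP : w ∈ P := interior_subset hw
      exact Real.exp_log hwP
    exact heq.differentiableAt_iff.1 hdg.exp
  · have heq : (fun _ : EuclideanSpace ℝ (Fin n) => (0:ℝ)) =ᶠ[nhds z] f := by
      filter_upwards [(isClosed_closure.isOpen_compl).mem_nhds hzc] with w hw
      have hwP : w ∉ P := fun h => hw (subset_closure h)
      exact (le_antisymm (h0 w) (not_lt.1 hwP)).symm ▸ rfl
    exact heq.differentiableAt_iff.1 (differentiableAt_const 0)

/-- First variation of a log-concave function along the Asplund sum with a dilated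
multiple of the indicator of a ball: for a.e. `z`, `f` is differentiable at `z` and
`lim_{t→0⁺} ((f ⋆ t·(a·1_{rB₂ⁿ}))(z) − f(z))/t = r|∇f(z)| + f(z) ln a`. -/
theorem asplund_first_variation_pointwise {n : ℕ}
    (f : EuclideanSpace ℝ (Fin n) → ℝ) (hf : IsLogConcaveFn f)
    (a r : ℝ) (ha : 0 < a) (hr : 0 < r) :
    ∀ᵐ z ∂(volume : Measure (EuclideanSpace ℝ (Fin n))),
      DifferentiableAt ℝ f z ∧
      Filter.Tendsto
        (fun t : ℝ =>
          (sSup ((fun y => f (z - (r * t) • y) * a ^ t) ''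
              Metric.closedBall (0 : EuclideanSpace ℝ (Fin n)) 1) - f z) / t)
        (nhdsWithin 0 (Set.Ioi 0))
        (nhds (r * ‖fderiv ℝ f z‖ + f z * Real.log a)) := by
  filter_upwards [logconcave_ae_differentiableAt f hf] with z hz
  exact ⟨hz, limit_at_diff_pt f hz ha hr⟩
end

section
/- Let f = e^{−ψ} : ℝⁿ → [0,∞) be a log-concave function with 0 < ∫_{ℝⁿ} f < ∞. Then lim_{t→0⁺} ( ∫_{ℝⁿ} (f ⋆ (t·f))(x) dx − ∫_{ℝⁿ} f(x) dx ) / t = n ∫_{ℝⁿ} f(x) dx + ∫_{ℝⁿ} f(x) ln f(x) dx, where (f ⋆ (t·f))(z) = e^{−(1+t)ψ(z/(1+t))} = f(z/(1+t))^{1+t}. -/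
open MeasureTheory Filter Set Metric
open scoped Pointwise ENNReal NNReal Topology RealInnerProductSpace

section LogcAux

variable {n : ℕ} {f : EuclideanSpace ℝ (Fin n) → ℝ}


-- elementary inequality: -(a * log a) ≤ 2 √a for 0 ≤ a
lemma logc_neg_mul_log_le_two_sqrt {a : ℝ} (ha : 0 ≤ a) : -(a * Real.log a) ≤ 2 * Real.sqrt a := by
  rcases eq_or_lt_of_le ha with h | h
  · simp [← h]
  have hs : 0 < Real.sqrt a := Real.sqrt_pos.2 h
  have h1 : Real.log ((Real.sqrt a)⁻¹) ≤ (Real.sqrt a)⁻¹ - 1 :=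
    Real.log_le_sub_one_of_pos (by positivity)
  have h2 : -Real.log a = 2 * Real.log ((Real.sqrt a)⁻¹) := by
    rw [Real.log_inv, Real.log_sqrt ha]; ring
  have h3 : -(a * Real.log a) = a * (2 * Real.log ((Real.sqrt a)⁻¹)) := by rw [← h2]; ring
  rw [h3]
  have h4 : a * (2 * Real.log ((Real.sqrt a)⁻¹)) ≤ a * (2 * (Real.sqrt a)⁻¹) := by
    apply mul_le_mul_of_nonneg_left _ ha
    nlinarith [h1]
  refine h4.trans ?_
  have : a * (2 * (Real.sqrt a)⁻¹) = 2 * (a / Real.sqrt a) := by ring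
  rw [this, Real.div_sqrt]

lemma logc_level_convex (hf0 : ∀ x, 0 ≤ f x)
    (hlc : ∀ x y : EuclideanSpace ℝ (Fin n), ∀ a b : ℝ, 0 ≤ a → 0 ≤ b → a + b = 1 →
      f x ^ a * f y ^ b ≤ f (a • x + b • y)) {δ : ℝ} (hδ : 0 < δ) :
    Convex ℝ {x | δ ≤ f x} := by
  intro x hx y hy a b ha hb hab
  simp only [mem_setOf_eq] at hx hy ⊢
  calc δ = δ ^ a * δ ^ b := by
        rw [← Real.rpow_add hδ, hab, Real.rpow_one]
    _ ≤ f x ^ a * f y ^ b := by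
        apply mul_le_mul (Real.rpow_le_rpow hδ.le hx ha) (Real.rpow_le_rpow hδ.le hy hb)
          (Real.rpow_nonneg hδ.le b) (Real.rpow_nonneg (hf0 x) a)
    _ ≤ f (a • x + b • y) := hlc x y a b ha hb hab

lemma logc_exists_ball_le (hf0 : ∀ x, 0 ≤ f x)
    (hlc : ∀ x y : EuclideanSpace ℝ (Fin n), ∀ a b : ℝ, 0 ≤ a → 0 ≤ b → a + b = 1 →
      f x ^ a * f y ^ b ≤ f (a • x + b • y))
    (hint : Integrable f volume) (hpos : 0 < ∫ x, f x) :
    ∃ (x₀ : EuclideanSpace ℝ (Fin n)) (r δ : ℝ), 0 < r ∧ 0 < δ ∧ δ ≤ 1 ∧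
      ∀ y ∈ closedBall x₀ r, δ ≤ f y := by
  -- find a positive level with positive measure
  have key : ∃ δ : ℝ, 0 < δ ∧ δ ≤ 1 ∧ 0 < volume {x | δ ≤ f x} := by
    by_contra h
    push_neg at h
    have hnull : ∀ k : ℕ, volume {x | 1/(k+1 : ℝ) ≤ f x} = 0 := by
      intro k
      have h1 : (0:ℝ) < 1/(k+1 : ℝ) := by positivity
      have h2 : (1:ℝ)/(k+1 : ℝ) ≤ 1 := by
        rw [div_le_one (by positivity)]; linarith [Nat.cast_nonneg (α := ℝ) k]
      exact le_antisymm (h _ h1 h2) zero_le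
    have hsub : {x | f x ≠ 0} ⊆ ⋃ k : ℕ, {x | 1/(k+1 : ℝ) ≤ f x} := by
      intro x hx
      have hfx : 0 < f x := lt_of_le_of_ne (hf0 x) (Ne.symm hx)
      obtain ⟨k, hk⟩ := exists_nat_gt (1 / f x)
      refine mem_iUnion.2 ⟨k, ?_⟩
      simp only [mem_setOf_eq]
      rw [div_le_iff₀ (by positivity)]
      rw [div_lt_iff₀ hfx] at hk
      nlinarith
    have hz : volume {x | f x ≠ 0} = 0 :=
      measure_mono_null hsub (measure_iUnion_null fun k => hnull k)
    have : f =ᵐ[volume] 0 := by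
      rw [Filter.EventuallyEq, ae_iff]
      simpa using hz
    rw [integral_congr_ae this] at hpos
    simp at hpos
  obtain ⟨δ, hδ, hδ1, hSpos⟩ := key
  set S := {x | δ ≤ f x} with hS
  have hconv : Convex ℝ S := logc_level_convex hf0 hlc hδ
  have hinterior : (interior S).Nonempty := by
    by_contra hempty
    have hspan : affineSpan ℝ S ≠ ⊤ := by
      intro htop
      exact hempty ((hconv.interior_nonempty_iff_affineSpan_eq_top).2 htop)
    have : volume S = 0 :=
      measure_mono_null (subset_affineSpan ℝ S)
        (Measure.addHaar_affineSubspace volume _ hspan)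
    rw [this] at hSpos; exact lt_irrefl 0 hSpos
  obtain ⟨x₀, hx₀⟩ := hinterior
  obtain ⟨r, hr, hball⟩ := Metric.isOpen_iff.1 isOpen_interior x₀ hx₀
  refine ⟨x₀, r/2, δ, by positivity, hδ, hδ1, fun y hy => ?_⟩
  have : y ∈ interior S := hball (lt_of_le_of_lt (mem_closedBall.1 hy) (by linarith))
  have hyS : y ∈ S := interior_subset this
  exact hyS

lemma logc_midpoint_lower (hf0 : ∀ x, 0 ≤ f x)
    (hlc : ∀ x y : EuclideanSpace ℝ (Fin n), ∀ a b : ℝ, 0 ≤ a → 0 ≤ b → a + b = 1 →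
      f x ^ a * f y ^ b ≤ f (a • x + b • y))
    {x₀ : EuclideanSpace ℝ (Fin n)} {r δ : ℝ} (hδ : 0 ≤ δ)
    (hball : ∀ y ∈ closedBall x₀ r, δ ≤ f y) (p : EuclideanSpace ℝ (Fin n)) :
    ∀ z ∈ closedBall (midpoint ℝ x₀ p) (r/2), Real.sqrt (f p * δ) ≤ f z := by
  intro z hz
  set y : EuclideanSpace ℝ (Fin n) := (2:ℝ) • z - p with hy
  have hyball : y ∈ closedBall x₀ r := by
    rw [mem_closedBall, dist_eq_norm] at hz ⊢
    have : y - x₀ = (2:ℝ) • (z - midpoint ℝ x₀ p) := by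
      have hmid := midpoint_add_self ℝ x₀ p
      rw [hy, smul_sub, two_smul, two_smul, hmid]; abel
    rw [this, norm_smul]
    simp only [Real.norm_ofNat]
    linarith [hz]
  have hzy : z = (2:ℝ)⁻¹ • p + (2:ℝ)⁻¹ • y := by
    rw [hy]; module
  have h1 := hlc p y (2⁻¹) (2⁻¹) (by norm_num) (by norm_num) (by norm_num)
  rw [← hzy] at h1
  refine le_trans ?_ h1
  have h2 : δ ≤ f y := hball y hyball
  have h3 : f p ^ (2⁻¹:ℝ) * δ ^ (2⁻¹:ℝ) ≤ f p ^ (2⁻¹:ℝ) * f y ^ (2⁻¹:ℝ) :=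
    mul_le_mul_of_nonneg_left (Real.rpow_le_rpow hδ h2 (by norm_num))
      (Real.rpow_nonneg (hf0 p) _)
  refine le_trans (le_of_eq ?_) h3
  rw [Real.sqrt_mul (hf0 p), Real.sqrt_eq_rpow, Real.sqrt_eq_rpow]
  norm_num

lemma logc_integrable_exp_decay {c : ℝ} (hc : 0 < c) :
    Integrable (fun x : EuclideanSpace ℝ (Fin n) => Real.exp (-(c * ‖x‖))) volume := by
  set ε : ℝ := min c 1 / (n + 1) with hε
  have hε0 : 0 < ε := by positivity
  have hε1 : ε ≤ 1 := by
    rw [hε, div_le_one (by positivity)]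
    calc min c 1 ≤ 1 := min_le_right _ _
      _ ≤ (n:ℝ) + 1 := by linarith [Nat.cast_nonneg (α := ℝ) n]
  have hεc : (n + 1 : ℝ) * ε ≤ c := by
    rw [hε]
    rw [mul_div_cancel₀ _ (by positivity : (n:ℝ) + 1 ≠ 0)]
    exact min_le_left _ _
  set K : ℝ := (1/ε) ^ (n+1 : ℕ) with hK
  have hKpos : 0 < K := by positivity
  have hbase : Integrable (fun x : EuclideanSpace ℝ (Fin n) =>
      K * (1 + ‖x‖) ^ (-(n+1 : ℝ))) volume := by
    apply Integrable.const_mul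
    apply integrable_one_add_norm (E := EuclideanSpace ℝ (Fin n)) (μ := volume)
    rw [finrank_euclideanSpace_fin]
    exact_mod_cast lt_add_one (n:ℝ)
  apply hbase.mono'
  · exact (Real.continuous_exp.comp ((continuous_const.mul continuous_norm)).neg).aestronglyMeasurable
  · refine ae_of_all _ fun x => ?_
    set s : ℝ := ‖x‖ with hs
    have hs0 : 0 ≤ s := norm_nonneg _
    have h1p : (0:ℝ) < 1 + s := by linarith
    rw [Real.norm_of_nonneg (Real.exp_pos _).le]
    -- (1+s)^(n+1) ≤ K exp(c s)
    have hstep : (1 + s) ≤ (1/ε) * Real.exp (ε * s) := by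
      have h2 : 1 + ε * s ≤ Real.exp (ε * s) := by
        have := Real.add_one_le_exp (ε * s)
        linarith
      have h3 : 1 + s ≤ (1/ε) * (1 + ε * s) := by
        have he : (1/ε) * (1 + ε * s) = 1/ε + s := by field_simp
        have h1ε : 1 ≤ 1/ε := by rw [le_div_iff₀ hε0]; linarith
        rw [he]; linarith
      refine h3.trans ?_
      exact mul_le_mul_of_nonneg_left h2 (by positivity)
    have hpow : (1 + s) ^ (n+1 : ℕ) ≤ K * Real.exp (c * s) := by
      calc (1 + s) ^ (n+1 : ℕ) ≤ ((1/ε) * Real.exp (ε * s)) ^ (n+1 : ℕ) :=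
            pow_le_pow_left₀ h1p.le hstep _
        _ = K * Real.exp (ε * s) ^ (n+1 : ℕ) := by rw [mul_pow, hK]
        _ = K * Real.exp ((n+1 : ℕ) * (ε * s)) := by rw [← Real.exp_nat_mul]
        _ ≤ K * Real.exp (c * s) := by
            apply mul_le_mul_of_nonneg_left _ hKpos.le
            apply Real.exp_le_exp.2
            push_cast
            nlinarith
    -- conclude
    have hrpow : (1 + s) ^ (-(n+1:ℝ)) = ((1 + s) ^ (n+1 : ℕ))⁻¹ := by
      rw [Real.rpow_neg h1p.le, ← Real.rpow_natCast (1+s) (n+1)]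
      push_cast
      ring_nf
    rw [hrpow, Real.exp_neg]
    have hP : (0:ℝ) < (1 + s) ^ (n+1 : ℕ) := by positivity
    have hE : (0:ℝ) < Real.exp (c * s) := Real.exp_pos _
    rw [← div_eq_mul_inv, le_div_iff₀ hP]
    calc (Real.exp (c*s))⁻¹ * (1 + s) ^ (n+1 : ℕ)
        ≤ (Real.exp (c*s))⁻¹ * (K * Real.exp (c * s)) := by
          apply mul_le_mul_of_nonneg_left hpow (by positivity)
      _ = K := by field_simp

lemma logc_integrable_mul_log (hf0 : ∀ x, 0 ≤ f x) (hint : Integrable f volume)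
    {C c : ℝ} (hc : 0 < c) (hC : 1 ≤ C)
    (hdecay : ∀ x, f x ≤ C * Real.exp (-(c * ‖x‖))) :
    Integrable (fun x => f x * Real.log (f x)) volume := by
  have hmeas : AEStronglyMeasurable (fun x => f x * Real.log (f x)) volume := by
    have hfm : AEMeasurable f volume := hint.1.aemeasurable
    exact (hfm.mul (Real.measurable_log.comp_aemeasurable hfm)).aestronglyMeasurable
  have hbound : Integrable (fun x => Real.log C * f x +
      2 * Real.sqrt C * Real.exp (-(c/2 * ‖x‖))) volume :=
    (hint.const_mul _).add ((logc_integrable_exp_decay (by positivity)).const_mul _)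
  apply hbound.mono' hmeas
  refine ae_of_all _ fun x => ?_
  set a : ℝ := f x with ha
  have ha0 : 0 ≤ a := hf0 x
  have haC : a ≤ C * Real.exp (-(c * ‖x‖)) := hdecay x
  have hexp1 : Real.exp (-(c * ‖x‖)) ≤ 1 :=
    Real.exp_le_one_iff.2 (by positivity |> neg_nonpos_of_nonneg)
  have hsqrt_exp : Real.sqrt (Real.exp (-(c * ‖x‖))) = Real.exp (-(c/2 * ‖x‖)) := by
    rw [Real.sqrt_eq_rpow, ← Real.exp_mul]
    congr 1; ring
  rw [Real.norm_eq_abs]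
  rcases le_or_gt 1 a with hcase | hcase
  · -- a ≥ 1 : log ≥ 0
    have hl0 : 0 ≤ Real.log a := Real.log_nonneg hcase
    rw [abs_of_nonneg (mul_nonneg ha0 hl0)]
    have h1 : a ≤ C := haC.trans (by nlinarith [Real.exp_pos (-(c * ‖x‖))])
    have h2 : a * Real.log a ≤ a * Real.log C :=
      mul_le_mul_of_nonneg_left (Real.log_le_log (by linarith) h1) ha0
    have h3 : (0:ℝ) ≤ 2 * Real.sqrt C * Real.exp (-(c/2 * ‖x‖)) := by positivity
    calc a * Real.log a ≤ Real.log C * a := by linarith [h2, mul_comm a (Real.log C)]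
      _ ≤ _ := by linarith
  · -- a < 1 : log < 0
    have hl0 : Real.log a ≤ 0 := by
      rcases eq_or_lt_of_le ha0 with h | h
      · simp [← h]
      · exact (Real.log_nonpos_iff h.le).2 hcase.le
    rw [abs_of_nonpos (mul_nonpos_of_nonneg_of_nonpos ha0 hl0)]
    have h4 : -(a * Real.log a) ≤ 2 * Real.sqrt a := logc_neg_mul_log_le_two_sqrt ha0
    have h5 : Real.sqrt a ≤ Real.sqrt C * Real.exp (-(c/2 * ‖x‖)) := by
      rw [← hsqrt_exp, ← Real.sqrt_mul (by linarith)]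
      exact Real.sqrt_le_sqrt haC
    have h6 : (0:ℝ) ≤ Real.log C * a := mul_nonneg (Real.log_nonneg hC) ha0
    calc -(a * Real.log a) ≤ 2 * Real.sqrt a := h4
      _ ≤ 2 * (Real.sqrt C * Real.exp (-(c/2 * ‖x‖))) := by linarith
      _ ≤ _ := by linarith

-- pointwise bound for the difference quotient
lemma logc_quot_bound_real {a M t : ℝ} (ha : 0 ≤ a) (haM : a ≤ M) (hM : 1 ≤ M)
    (ht : 0 < t) (ht1 : t ≤ 1) :
    |(a ^ (1+t : ℝ) - a)/t| ≤ a * |Real.log a| + (M+1) * a := by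
  rcases eq_or_lt_of_le ha with h | h
  · rw [← h, Real.zero_rpow (by positivity : (1:ℝ)+t ≠ 0)]
    simp
  · -- a > 0
    have hsplit : a ^ (1+t : ℝ) = a * a ^ (t : ℝ) := by
      rw [Real.rpow_add h, Real.rpow_one]
    have hquot : (a ^ (1+t : ℝ) - a)/t = a * ((a ^ (t:ℝ) - 1)/t) := by
      rw [hsplit]; ring
    rw [hquot, abs_mul, abs_of_nonneg ha]
    -- lower bound for (a^t - 1)/t
    have hlow : Real.log a ≤ (a ^ (t:ℝ) - 1)/t := by
      rw [le_div_iff₀ ht]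
      have h1 : t * Real.log a + 1 ≤ Real.exp (t * Real.log a) :=
        by linarith [Real.add_one_le_exp (t * Real.log a)]
      have h2 : Real.exp (t * Real.log a) = a ^ (t:ℝ) := by
        rw [Real.rpow_def_of_pos h, mul_comm]
      linarith [h2 ▸ h1]
    -- upper bound
    have hup : (a ^ (t:ℝ) - 1)/t ≤ a - 1 := by
      rw [div_le_iff₀ ht]
      have h3 : a ^ (t:ℝ) * 1 ^ (1-t : ℝ) ≤ t * a + (1-t) * 1 :=
        Real.geom_mean_le_arith_mean2_weighted ht.le (by linarith) ha zero_le_one (by ring)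
      rw [Real.one_rpow, mul_one] at h3
      nlinarith
    have habs : |(a ^ (t:ℝ) - 1)/t| ≤ |Real.log a| + (M+1) := by
      rw [abs_le]
      constructor
      · have := neg_abs_le (Real.log a)
        nlinarith [abs_nonneg (Real.log a)]
      · have : a - 1 ≤ M + 1 := by linarith
        have h4 := hup.trans this
        nlinarith [abs_nonneg (Real.log a)]
    calc a * |(a ^ (t:ℝ) - 1)/t| ≤ a * (|Real.log a| + (M+1)) :=
          mul_le_mul_of_nonneg_left habs ha
      _ = a * |Real.log a| + (M+1) * a := by ring

-- pointwise convergence of the difference quotient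
lemma logc_quot_tendsto_real {a : ℝ} (ha : 0 ≤ a) :
    Tendsto (fun t : ℝ => (a ^ (1+t : ℝ) - a)/t) (𝓝[>] (0:ℝ))
      (𝓝 (a * Real.log a)) := by
  rcases eq_or_lt_of_le ha with h | h
  · -- a = 0
    have : ∀ᶠ t : ℝ in 𝓝[>] (0:ℝ), ((0:ℝ)^(1+t:ℝ) - 0)/t = 0 := by
      filter_upwards [self_mem_nhdsWithin] with t ht
      rw [Real.zero_rpow (by simp at ht; positivity : (1:ℝ)+t ≠ 0)]
      simp
    rw [← h]
    simp only [Real.log_zero, mul_zero]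
    exact Tendsto.congr' (this.mono fun t h' => h'.symm) tendsto_const_nhds
  · -- a > 0
    have hderiv : HasDerivAt (fun t : ℝ => Real.exp (Real.log a * t)) (Real.log a) 0 := by
      have h1 : HasDerivAt (fun t : ℝ => Real.log a * t) (Real.log a) 0 := by
        simpa using (hasDerivAt_id (0:ℝ)).const_mul (Real.log a)
      have h2 := (Real.hasDerivAt_exp (Real.log a * 0)).comp 0 h1
      simpa [Function.comp_def] using h2
    have hslope := hasDerivAt_iff_tendsto_slope.1 hderiv
    have hslope' : Tendsto (slope (fun t : ℝ => Real.exp (Real.log a * t)) 0)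
        (𝓝[>] (0:ℝ)) (𝓝 (Real.log a)) :=
      hslope.mono_left (nhdsWithin_mono 0 fun t ht => by
        simp only [mem_compl_iff, mem_singleton_iff]
        exact ne_of_gt ht)
    have hmul := hslope'.const_mul a
    have heq : ∀ᶠ t : ℝ in 𝓝[>] (0:ℝ),
        a * slope (fun t : ℝ => Real.exp (Real.log a * t)) 0 t
          = (a ^ (1+t : ℝ) - a)/t := by
      filter_upwards [self_mem_nhdsWithin] with t ht
      have ht0 : (0:ℝ) < t := ht
      rw [slope_def_field]
      have h2 : Real.exp (Real.log a * t) = a ^ (t:ℝ) := by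
        rw [Real.rpow_def_of_pos h]
      have h3 : a ^ (1+t:ℝ) = a * a ^ (t:ℝ) := by
        rw [Real.rpow_add h, Real.rpow_one]
      rw [h2, h3]
      simp only [mul_zero, Real.exp_zero]
      rw [sub_zero]
      ring
    rw [mul_comm (a) (Real.log a)] at hmul
    exact Tendsto.congr' heq (by rw [mul_comm]; exact hmul)

lemma logc_master (hf0 : ∀ x, 0 ≤ f x)
    (hlc : ∀ x y : EuclideanSpace ℝ (Fin n), ∀ a b : ℝ, 0 ≤ a → 0 ≤ b → a + b = 1 →
      f x ^ a * f y ^ b ≤ f (a • x + b • y))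
    (hint : Integrable f volume) (hpos : 0 < ∫ x, f x) :
    ∃ M C c : ℝ, 1 ≤ M ∧ (∀ x, f x ≤ M) ∧ 0 < c ∧ 1 ≤ C ∧
      ∀ x, f x ≤ C * Real.exp (-(c * ‖x‖)) := by
  obtain ⟨x₀, r, δ, hr, hδ, hδ1, hball⟩ := logc_exists_ball_le hf0 hlc hint hpos
  have hv : 0 < (volume (closedBall (0 : EuclideanSpace ℝ (Fin n)) (r/2))).toReal := by
    apply ENNReal.toReal_pos
    · exact (measure_closedBall_pos volume _ (by positivity)).ne'
    · exact measure_closedBall_lt_top.ne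
  set v := (volume (closedBall (0 : EuclideanSpace ℝ (Fin n)) (r/2))).toReal with hvdef
  have hkey : ∀ p : EuclideanSpace ℝ (Fin n),
      Real.sqrt (f p * δ) * v ≤ ∫ x in closedBall (midpoint ℝ x₀ p) (r/2), f x := by
    intro p
    have h1 : Real.sqrt (f p * δ) * (volume (closedBall (midpoint ℝ x₀ p) (r/2))).toReal
        ≤ ∫ x in closedBall (midpoint ℝ x₀ p) (r/2), f x :=
      setIntegral_ge_of_const_le_real measurableSet_closedBall measure_closedBall_lt_top.ne
        (logc_midpoint_lower hf0 hlc hδ.le hball p) hint.integrableOn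
    rwa [Measure.addHaar_closedBall_center] at h1
  have hle : ∀ p : EuclideanSpace ℝ (Fin n),
      (∫ x in closedBall (midpoint ℝ x₀ p) (r/2), f x) ≤ ∫ x, f x := fun p =>
    setIntegral_le_integral hint (ae_of_all _ hf0)
  set I := ∫ x, f x with hI
  -- boundedness
  have hbdd : ∃ M : ℝ, 1 ≤ M ∧ ∀ x, f x ≤ M := by
    refine ⟨max 1 ((I/v)^2/δ), le_max_left _ _, fun p => ?_⟩
    have h1 : Real.sqrt (f p * δ) ≤ I / v := by
      rw [le_div_iff₀ hv]
      exact (hkey p).trans (hle p)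
    have h2 : f p * δ ≤ (I/v)^2 := by
      have h3 : Real.sqrt (f p * δ) ^ 2 ≤ (I/v)^2 :=
        pow_le_pow_left₀ (Real.sqrt_nonneg _) h1 2
      rwa [Real.sq_sqrt (mul_nonneg (hf0 p) hδ.le)] at h3
    have : f p ≤ (I/v)^2/δ := by
      rw [le_div_iff₀ hδ]; exact h2
    exact this.trans (le_max_right _ _)
  obtain ⟨M, hM, hMb⟩ := hbdd
  -- level set boundedness
  have hlevel : ∃ R : ℝ, 1 ≤ R ∧ ∀ x, R < ‖x - x₀‖ → f x < δ/2 := by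
    have hUnion : (⋃ k : ℕ, closedBall x₀ (k : ℝ)) = univ := by
      refine eq_univ_of_forall fun y => ?_
      obtain ⟨k, hk⟩ := exists_nat_gt (dist y x₀)
      exact mem_iUnion.2 ⟨k, mem_closedBall.2 hk.le⟩
    have htendsto : Tendsto (fun k : ℕ => ∫ x in closedBall x₀ (k:ℝ), f x) atTop (𝓝 I) := by
      have h := tendsto_setIntegral_of_monotone (f := f) (μ := volume)
        (s := fun k : ℕ => closedBall x₀ (k:ℝ))
        (fun k => measurableSet_closedBall)
        (fun i j hij => closedBall_subset_closedBall (by exact_mod_cast hij))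
        (by rw [hUnion]; exact hint.integrableOn)
      rwa [hUnion, setIntegral_univ] at h
    have hev : ∀ᶠ k : ℕ in atTop, I - δ/2 * v < ∫ x in closedBall x₀ (k:ℝ), f x :=
      htendsto.eventually (eventually_gt_nhds (by nlinarith))
    obtain ⟨k₀, hk₀⟩ := hev.exists
    refine ⟨2*(k₀:ℝ) + r + 1,
      by have := Nat.cast_nonneg (α := ℝ) k₀; linarith, fun x hx => ?_⟩
    by_contra hcon
    push_neg at hcon
    set T := closedBall (midpoint ℝ x₀ x) (r/2) with hT
    have hTsub : T ⊆ (closedBall x₀ (k₀:ℝ))ᶜ := by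
      intro z hz
      simp only [mem_compl_iff, mem_closedBall, not_le]
      have h1 : dist (midpoint ℝ x₀ x) x₀ = ‖x - x₀‖ / 2 := by
        rw [dist_midpoint_left, dist_comm, dist_eq_norm]
        norm_num
        ring
      have h2 : dist z (midpoint ℝ x₀ x) ≤ r/2 := mem_closedBall.1 hz
      have h3 := dist_triangle (midpoint ℝ x₀ x) z x₀
      rw [dist_comm (midpoint ℝ x₀ x) z] at h3
      calc (k₀:ℝ) < ‖x - x₀‖/2 - r/2 := by linarith
      _ ≤ dist z x₀ := by linarith
    have hTlow : δ/2 * v ≤ ∫ x in T, f x := by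
      refine le_trans ?_ (hkey x)
      apply mul_le_mul_of_nonneg_right _ hv.le
      rw [show δ/2 = Real.sqrt ((δ/2)*(δ/2)) by
        rw [Real.sqrt_mul_self (by positivity)]]
      apply Real.sqrt_le_sqrt
      nlinarith
    have hcompl : (∫ x in (closedBall x₀ (k₀:ℝ))ᶜ, f x)
        = I - ∫ x in closedBall x₀ (k₀:ℝ), f x := by
      have := integral_add_compl (measurableSet_closedBall (x := x₀) (ε := (k₀:ℝ))) hint
      linarith [this]
    have hTup : (∫ x in T, f x) ≤ ∫ x in (closedBall x₀ (k₀:ℝ))ᶜ, f x := by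
      apply setIntegral_mono_set hint.integrableOn
        (ae_restrict_of_ae (ae_of_all _ hf0)) (HasSubset.Subset.eventuallyLE hTsub)
    rw [hcompl] at hTup
    linarith
  obtain ⟨R, hR, hlev⟩ := hlevel
  have hx₀ : δ ≤ f x₀ := hball x₀ (mem_closedBall_self hr.le)
  have hdecay : ∃ C c : ℝ, 0 < c ∧ 1 ≤ C ∧ ∀ x, f x ≤ C * Real.exp (-(c * ‖x‖)) := by
    set R₁ : ℝ := R + 1 with hR₁
    have hR₁pos : 0 < R₁ := by linarith
    set c : ℝ := Real.log 2 / (2 * R₁) with hc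
    have hcpos : 0 < c := div_pos (Real.log_pos one_lt_two) (by linarith)
    have hmain : ∀ x, f x ≤ 2 * M * Real.exp (-(c * ‖x - x₀‖)) := by
      intro x
      set s : ℝ := ‖x - x₀‖ with hs
      have hs0 : 0 ≤ s := norm_nonneg _
      rcases le_or_gt s (2 * R₁) with hcase | hcase
      · -- close case
        have h2 : c * s ≤ Real.log 2 := by
          rw [hc, div_mul_eq_mul_div, mul_comm]
          rw [div_le_iff₀ (by linarith)]
          have := Real.log_pos one_lt_two
          nlinarith
        have h4 : Real.exp (-Real.log 2) ≤ Real.exp (-(c*s)) := Real.exp_le_exp.2 (by linarith)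
        rw [Real.exp_neg, Real.exp_log two_pos] at h4
        nlinarith [hMb x, hM]
      · -- far case
        set lam : ℝ := 2 * R₁ / s with hlam
        have hspos : 0 < s := by linarith
        have hlam0 : 0 < lam := by positivity
        have hlam1 : lam < 1 := by
          rw [hlam, div_lt_one hspos]; exact hcase
        set q : EuclideanSpace ℝ (Fin n) := x₀ + lam • (x - x₀) with hq
        have hq_comb : q = (1 - lam) • x₀ + lam • x := by rw [hq]; module
        have hq_dist : ‖q - x₀‖ = 2 * R₁ := by
          rw [hq]
          simp only [add_sub_cancel_left, norm_smul]
          rw [Real.norm_of_nonneg hlam0.le, hlam]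
          field_simp
          exact hs.symm
        have hfq : f q < δ/2 := hlev q (by rw [hq_dist]; linarith)
        have hlc2 := hlc x₀ x (1 - lam) lam (by linarith) hlam0.le (by ring)
        rw [← hq_comb] at hlc2
        have hdel : δ ^ (1 - lam) * f x ^ lam ≤ f q := by
          refine le_trans ?_ hlc2
          apply mul_le_mul_of_nonneg_right
            (Real.rpow_le_rpow hδ.le hx₀ (by linarith)) (Real.rpow_nonneg (hf0 x) _)
        have h5 : δ ^ (1 - lam) * δ ^ (lam:ℝ) = δ := by
          rw [← Real.rpow_add hδ]; norm_num
        have hpow : f x ^ (lam:ℝ) ≤ δ ^ (lam:ℝ) / 2 := by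
          have hd1 : (0:ℝ) < δ ^ (1 - lam) := Real.rpow_pos_of_pos hδ _
          have h3 : f x ^ (lam:ℝ) ≤ (δ/2) / δ ^ (1 - lam) := by
            rw [le_div_iff₀ hd1, mul_comm]
            exact le_of_lt (lt_of_le_of_lt hdel hfq)
          refine h3.trans (le_of_eq ?_)
          rw [div_eq_div_iff (ne_of_gt hd1) (two_ne_zero)]
          linear_combination -h5
        have h6 : f x = (f x ^ (lam:ℝ)) ^ (lam⁻¹ : ℝ) := by
          rw [← Real.rpow_mul (hf0 x), mul_inv_cancel₀ hlam0.ne', Real.rpow_one]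
        have h7 : (f x ^ (lam:ℝ)) ^ (lam⁻¹:ℝ) ≤ (δ ^ (lam:ℝ) / 2) ^ (lam⁻¹:ℝ) :=
          Real.rpow_le_rpow (Real.rpow_nonneg (hf0 x) _) hpow (inv_nonneg.2 hlam0.le)
        have h8 : (δ ^ (lam:ℝ) / 2) ^ (lam⁻¹:ℝ) = δ * Real.exp (-(c*s)) := by
          rw [Real.div_rpow (Real.rpow_nonneg hδ.le _) two_pos.le]
          rw [← Real.rpow_mul hδ.le, mul_inv_cancel₀ hlam0.ne', Real.rpow_one]
          have h9 : (2:ℝ) ^ (lam⁻¹:ℝ) = Real.exp (c * s) := by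
            rw [Real.rpow_def_of_pos two_pos]
            congr 1
            rw [hc, hlam]
            field_simp
          rw [h9, Real.exp_neg, div_eq_mul_inv]
        have hfx : f x ≤ δ * Real.exp (-(c * s)) := by
          rw [h6]; rw [h8] at h7; exact h7
        have hexp : 0 < Real.exp (-(c * s)) := Real.exp_pos _
        nlinarith
    refine ⟨2 * M * Real.exp (c * ‖x₀‖), c, hcpos, ?_, fun x => ?_⟩
    · have h1 : (1:ℝ) ≤ Real.exp (c * ‖x₀‖) := Real.one_le_exp (by positivity)
      nlinarith
    · have h2 : ‖x‖ - ‖x₀‖ ≤ ‖x - x₀‖ := norm_sub_norm_le x x₀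
      have h3 : Real.exp (-(c * ‖x - x₀‖)) ≤ Real.exp (c * ‖x₀‖ + -(c * ‖x‖)) := by
        apply Real.exp_le_exp.2
        nlinarith
      calc f x ≤ 2 * M * Real.exp (-(c * ‖x - x₀‖)) := hmain x
        _ ≤ 2 * M * Real.exp (c * ‖x₀‖ + -(c * ‖x‖)) := by nlinarith
        _ = 2 * M * Real.exp (c * ‖x₀‖) * Real.exp (-(c * ‖x‖)) := by
            rw [Real.exp_add]; ring
  obtain ⟨C, c, hc, hC, hd⟩ := hdecay
  exact ⟨M, C, c, hM, hMb, hc, hC, hd⟩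

theorem logc_main_thm
    (hf0 : ∀ x, 0 ≤ f x)
    (hlc : ∀ x y : EuclideanSpace ℝ (Fin n), ∀ a b : ℝ, 0 ≤ a → 0 ≤ b → a + b = 1 →
      f x ^ a * f y ^ b ≤ f (a • x + b • y))
    (hint : Integrable f volume) (hpos : 0 < ∫ x, f x) :
    Filter.Tendsto
      (fun t : ℝ =>
        ((∫ x, f ((1 + t)⁻¹ • x) ^ (1 + t)) - ∫ x, f x) / t)
      (nhdsWithin 0 (Set.Ioi 0))
      (nhds ((n : ℝ) * (∫ x, f x) + ∫ x, f x * Real.log (f x))) := by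
  obtain ⟨M, C, c, hM, hMb, hc, hC, hdecay⟩ := logc_master hf0 hlc hint hpos
  have hflog : Integrable (fun x => f x * Real.log (f x)) volume :=
    logc_integrable_mul_log hf0 hint hc hC hdecay
  have hflogabs : Integrable (fun x => f x * |Real.log (f x)|) volume := by
    apply hflog.abs.congr
    refine ae_of_all _ fun x => ?_
    show |f x * Real.log (f x)| = f x * |Real.log (f x)|
    rw [abs_mul, abs_of_nonneg (hf0 x)]
  set I := ∫ x, f x with hI
  set L := ∫ x, f x * Real.log (f x) with hL
  -- measurability of powers
  have hmeaspow : ∀ t : ℝ, 0 < t →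
      AEStronglyMeasurable (fun x => f x ^ (1+t:ℝ)) volume := by
    intro t ht
    have hcont : Continuous fun y : ℝ => y ^ (1+t:ℝ) :=
      continuous_iff_continuousAt.2 fun y =>
        Real.continuousAt_rpow_const y _ (Or.inr (by linarith))
    exact hcont.comp_aestronglyMeasurable hint.1
  -- integrability of powers
  have hintpow : ∀ t : ℝ, t ∈ Ioc (0:ℝ) 1 →
      Integrable (fun x => f x ^ (1+t:ℝ)) volume := by
    intro t ht
    apply (hint.const_mul (M+1)).mono' (hmeaspow t ht.1)
    refine ae_of_all _ fun x => ?_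
    have ha := hf0 x
    rw [Real.norm_of_nonneg (Real.rpow_nonneg ha _)]
    rcases eq_or_lt_of_le ha with h | h
    · rw [← h, Real.zero_rpow (ne_of_gt (by linarith [ht.1] : (0:ℝ) < 1+t))]
      nlinarith
    · have hsplit : f x ^ (1+t:ℝ) = f x * f x ^ (t:ℝ) := by
        rw [Real.rpow_add h, Real.rpow_one]
      have hpowle : f x ^ (t:ℝ) ≤ M := by
        rcases le_or_gt (f x) 1 with hle1 | hgt1
        · exact (Real.rpow_le_one ha hle1 ht.1.le).trans hM
        · calc f x ^ (t:ℝ) ≤ f x ^ (1:ℝ) :=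
                Real.rpow_le_rpow_of_exponent_le hgt1.le ht.2
            _ = f x := Real.rpow_one _
            _ ≤ M := hMb x
      rw [hsplit]
      nlinarith [hMb x]
  -- dominated convergence for the difference quotients
  have hQ : Tendsto (fun t : ℝ => ∫ x, (f x ^ (1+t:ℝ) - f x)/t) (𝓝[>] (0:ℝ)) (𝓝 L) := by
    apply tendsto_integral_filter_of_dominated_convergence
      (bound := fun x => f x * |Real.log (f x)| + (M+1) * f x)
    · filter_upwards [self_mem_nhdsWithin] with t ht
      have hsub : AEStronglyMeasurable (fun x => f x ^ (1+t:ℝ) - f x) volume :=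
        (hmeaspow t ht).sub hint.1
      exact (hsub.mul_const t⁻¹).congr (ae_of_all _ fun x => (div_eq_mul_inv _ _).symm)
    · filter_upwards [Ioc_mem_nhdsGT_of_mem (Set.left_mem_Ico.2 zero_lt_one)] with t ht
      refine ae_of_all _ fun x => ?_
      have := logc_quot_bound_real (hf0 x) (hMb x) hM ht.1 ht.2
      rw [Real.norm_eq_abs]
      exact this
    · exact hflogabs.add (hint.const_mul _)
    · exact ae_of_all _ fun x => logc_quot_tendsto_real (hf0 x)
  -- the integral identity
  have hphi : ∀ t : ℝ, t ∈ Ioc (0:ℝ) 1 →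
      (∫ x, (f x ^ (1+t:ℝ) - f x)/t) = ((∫ x, f x ^ (1+t:ℝ)) - I)/t := by
    intro t ht
    rw [integral_div, integral_sub (hintpow t ht) hint]
  -- elementary limit of ((1+t)^n - 1)/t
  have hA : Tendsto (fun t : ℝ => ((1+t)^n - 1)/t) (𝓝[>] (0:ℝ)) (𝓝 (n:ℝ)) := by
    have hd : HasDerivAt (fun t : ℝ => (1+t)^n) ((n:ℝ)) 0 := by
      have h := ((hasDerivAt_id (0:ℝ)).const_add (1:ℝ)).pow n
      simpa [Pi.pow_def] using h
    have hs := hasDerivAt_iff_tendsto_slope.1 hd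
    have hs' : Tendsto (slope (fun t : ℝ => (1+t)^n) 0) (𝓝[>] (0:ℝ)) (𝓝 (n:ℝ)) :=
      hs.mono_left (nhdsWithin_mono (0:ℝ) fun t (ht : t ∈ Ioi 0) => ne_of_gt ht)
    refine Tendsto.congr' ?_ hs'
    filter_upwards [self_mem_nhdsWithin] with t ht
    rw [slope_def_field]
    norm_num
  -- the integral of powers tends to I
  have hB : Tendsto (fun t : ℝ => ∫ x, f x ^ (1+t:ℝ)) (𝓝[>] (0:ℝ)) (𝓝 I) := by
    have h0 : Tendsto (fun t : ℝ => I + t * (∫ x, (f x ^ (1+t:ℝ) - f x)/t))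
        (𝓝[>] (0:ℝ)) (𝓝 (I + 0 * L)) :=
      tendsto_const_nhds.add ((tendsto_id.mono_left nhdsWithin_le_nhds).mul hQ)
    rw [zero_mul, add_zero] at h0
    refine Tendsto.congr' ?_ h0
    filter_upwards [Ioc_mem_nhdsGT_of_mem (Set.left_mem_Ico.2 zero_lt_one)] with t ht
    rw [hphi t ht]
    have ht0 : t ≠ 0 := ne_of_gt ht.1
    field_simp
    ring
  have hfinal : Tendsto (fun t : ℝ =>
      (((1+t)^n - 1)/t) * (∫ x, f x ^ (1+t:ℝ)) + ∫ x, (f x ^ (1+t:ℝ) - f x)/t)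
      (𝓝[>] (0:ℝ)) (𝓝 ((n:ℝ) * I + L)) := (hA.mul hB).add hQ
  refine Tendsto.congr' ?_ hfinal
  filter_upwards [Ioc_mem_nhdsGT_of_mem (Set.left_mem_Ico.2 zero_lt_one)] with t ht
  have hcov : (∫ x, f ((1+t)⁻¹ • x) ^ (1+t:ℝ)) = (1+t)^n * ∫ x, f x ^ (1+t:ℝ) := by
    have h := Measure.integral_comp_inv_smul_of_nonneg
      (volume : Measure (EuclideanSpace ℝ (Fin n)))
      (fun y => f y ^ (1+t:ℝ)) (R := 1+t) (by linarith [ht.1])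
    rw [finrank_euclideanSpace_fin, smul_eq_mul] at h
    exact h
  rw [hcov, hphi t ht]
  have ht0 : t ≠ 0 := ne_of_gt ht.1
  field_simp
  ring

end LogcAux

/-- First variation of the integral of a log-concave function `f` in the direction of
itself: `lim_{t→0⁺} (∫ (f ⋆ t·f) − ∫ f)/t = n∫f + ∫ f ln f`, where
`(f ⋆ t·f)(x) = f(x/(1+t))^{1+t}`. -/
theorem asplund_self_first_variation {n : ℕ}
    (f : EuclideanSpace ℝ (Fin n) → ℝ) (hf : IsLogConcaveFn f)
    (hint : Integrable f volume) (hpos : 0 < ∫ x, f x) :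
    Filter.Tendsto
      (fun t : ℝ =>
        ((∫ x, f ((1 + t)⁻¹ • x) ^ (1 + t)) - ∫ x, f x) / t)
      (nhdsWithin 0 (Set.Ioi 0))
      (nhds ((n : ℝ) * (∫ x, f x) + ∫ x, f x * Real.log (f x))) :=
  logc_main_thm hf.1 hf.2 hint hpos
end
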